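/- arXiv:math/0205033 — 5 statements merged into one kernel-verified Lean document; each statement's English description precedes it below -/
import Mathlib

section
/- Let (ℱ_n)_{n≥0} be a filtration on a probability space and let (M_n)_{n≥0} be a real-valued martingale with respect to (ℱ_n) with M_0 = 0. Let ζ_j = M_j − M_{j−1} be its increments, and let N be a positive integer and K > 0 a constant such that E|ζ_j|^{2N} ≤ K for all j ≥ 1. Then there exists a constant C = C(N, K) such that E M_n^{2N} ≤ C n^N for all n ≥ 1. -/
open MeasureTheory Finset
open scoped ENNReal

lemma aux_young {a b : ℝ} {k p : ℕ} (hkp : k ≤ p) :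
    |a| ^ (p - k) * |b| ^ k ≤ |a| ^ p + |b| ^ p := by
  have h1 : |a| ^ (p - k) * |b| ^ k ≤ max |a| |b| ^ (p - k) * max |a| |b| ^ k := by
    gcongr <;> simp [abs_nonneg, le_max_left, le_max_right]
  rw [← pow_add, Nat.sub_add_cancel hkp] at h1
  refine h1.trans ?_
  rcases le_total |a| |b| with h | h
  · rw [max_eq_right h]
    nlinarith [pow_nonneg (abs_nonneg a) p]
  · rw [max_eq_left h]
    nlinarith [pow_nonneg (abs_nonneg b) p]

lemma aux_choose_le {p k : ℕ} : (p.choose k) ≤ 2 ^ p := by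
  rcases le_or_gt k p with h | h
  · calc p.choose k ≤ ∑ m ∈ range (p + 1), p.choose m :=
        Finset.single_le_sum (fun i _ => Nat.zero_le _) (by simp [Nat.lt_succ_iff, h])
    _ = 2 ^ p := Nat.sum_range_choose p
  · rw [Nat.choose_eq_zero_of_lt h]; positivity

lemma aux_holder {Ω : Type*} {m0 : MeasurableSpace Ω} (μ : Measure Ω)
    {f g : Ω → ℝ≥0∞} (hf : AEMeasurable f μ) (hg : AEMeasurable g μ)
    {p k : ℕ} (hk1 : 1 ≤ k) (hkp : k < p) :
    ∫⁻ ω, f ω ^ (p - k) * g ω ^ k ∂μ ≤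
      (∫⁻ ω, f ω ^ p ∂μ) ^ ((((p : ℝ)) - k) / p) * (∫⁻ ω, g ω ^ p ∂μ) ^ ((k : ℝ) / p) := by
  have hppos : (0:ℝ) < p := by
    have : 0 < p := lt_of_le_of_lt (Nat.zero_le k) hkp
    exact_mod_cast this
  have hkpos : (0:ℝ) < k := by exact_mod_cast hk1
  have hpk : (0:ℝ) < (p:ℝ) - k := by
    have : (k:ℝ) < p := by exact_mod_cast hkp
    linarith
  set r : ℝ := p / ((p:ℝ) - k) with hr
  set q : ℝ := p / (k:ℝ) with hq
  have hpq : Real.HolderConjugate r q := by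
    rw [Real.holderConjugate_iff]; constructor
    · rw [hr, lt_div_iff₀ hpk]; linarith
    · rw [hr, hq]; field_simp; ring
  have H := ENNReal.lintegral_mul_le_Lp_mul_Lq μ hpq
    (hf.pow_const (p - k : ℕ)) (hg.pow_const k)
  have e1 : ∀ x : ℝ≥0∞, (x ^ (p - k : ℕ)) ^ r = x ^ (p : ℕ) := by
    intro x
    rw [← ENNReal.rpow_natCast x (p - k), ← ENNReal.rpow_natCast x p, ← ENNReal.rpow_mul]
    congr 1
    have : ((p - k : ℕ) : ℝ) = (p:ℝ) - k := by
      rw [Nat.cast_sub hkp.le]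
    rw [this, hr]
    field_simp
  have e2 : ∀ x : ℝ≥0∞, (x ^ (k : ℕ)) ^ q = x ^ (p : ℕ) := by
    intro x
    rw [← ENNReal.rpow_natCast x k, ← ENNReal.rpow_natCast x p, ← ENNReal.rpow_mul]
    congr 1
    rw [hq]; field_simp
  have er : 1 / r = ((p:ℝ) - k) / p := by rw [hr, one_div_div]
  have eq' : 1 / q = (k:ℝ) / p := by rw [hq, one_div_div]
  simp only [Pi.mul_apply] at H
  calc ∫⁻ ω, f ω ^ (p - k) * g ω ^ k ∂μ ≤ _ := H
  _ = _ := by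
      rw [er, eq']
      congr 1
      · congr 1; exact lintegral_congr fun ω => e1 (f ω)
      · congr 1; exact lintegral_congr fun ω => e2 (g ω)

/-- If (M_n) is a martingale with M_0 = 0 whose increments ζ_j = M_j − M_{j−1}
satisfy E|ζ_j|^{2N} ≤ K for all j ≥ 1, then there is C = C(N, K) with
E M_n^{2N} ≤ C n^N for all n ≥ 1. -/
theorem stmt1
    {Ω : Type*} {m0 : MeasurableSpace Ω} {μ : Measure Ω} [IsProbabilityMeasure μ]
    (ℱ : Filtration ℕ m0) (M : ℕ → Ω → ℝ)
    (hM : Martingale M ℱ μ) (hM0 : M 0 = 0)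
    (N : ℕ) (hN : 0 < N) (K : ℝ) (hK : 0 < K)
    (hmom : ∀ j ≥ 1, ∫⁻ ω, ‖M j ω - M (j - 1) ω‖₊ ^ (2 * N) ∂μ ≤ ENNReal.ofReal K) :
    ∃ C : ℝ, ∀ n ≥ 1,
      ∫⁻ ω, ‖M n ω‖₊ ^ (2 * N) ∂μ ≤ ENNReal.ofReal (C * (n : ℝ) ^ N) := by
  classical
  set p := 2 * N with hp_def
  have hp2 : 2 ≤ p := by omega
  have hp0 : p ≠ 0 := by omega
  set ζ : ℕ → Ω → ℝ := fun j ω => M (j + 1) ω - M j ω with hζ_def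
  have hSM : ∀ j, StronglyMeasurable (M j) := fun j => (hM.stronglyAdapted j).mono (ℱ.le j)
  have hζSM : ∀ j, StronglyMeasurable (ζ j) := fun j => (hSM (j + 1)).sub (hSM j)
  have hmomζ : ∀ j, ∫⁻ ω, (‖ζ j ω‖₊ : ℝ≥0∞) ^ p ∂μ ≤ ENNReal.ofReal K := by
    intro j
    have := hmom (j + 1) (by omega)
    simpa using this
  -- membership in L^p
  have hζmem : ∀ j, MemLp (ζ j) p μ := by
    intro j
    refine ⟨(hζSM j).aestronglyMeasurable, ?_⟩
    rw [eLpNorm_eq_lintegral_rpow_enorm_toReal (by exact_mod_cast hp0) (by simp)]; simp only [enorm_eq_nnnorm]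
    refine ENNReal.rpow_lt_top_of_nonneg (by positivity) ?_
    have : ∫⁻ ω, (‖ζ j ω‖₊ : ℝ≥0∞) ^ ((p : ℝ≥0∞)).toReal ∂μ
        = ∫⁻ ω, (‖ζ j ω‖₊ : ℝ≥0∞) ^ p ∂μ := by
      refine lintegral_congr fun ω => ?_
      simp [ENNReal.rpow_natCast]
    rw [this]
    exact ((hmomζ j).trans_lt ENNReal.ofReal_lt_top).ne
  have hMmem : ∀ n, MemLp (M n) p μ := by
    intro n
    induction n with
    | zero => rw [hM0]; exact MemLp.zero
    | succ m ih =>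
        have : M (m + 1) = fun ω => M m ω + ζ m ω := by
          funext ω; simp [hζ_def]
        rw [this]
        exact ih.add (hζmem m)
  -- integrability of |f|^p
  have habs : ∀ f : Ω → ℝ, MemLp f p μ → Integrable (fun ω => |f ω| ^ p) μ := by
    intro f hf
    have h := hf.integrable_norm_rpow (by exact_mod_cast hp0) (by simp)
    refine h.congr (Filter.Eventually.of_forall fun ω => ?_)
    simp [Real.rpow_natCast, Real.norm_eq_abs, abs_pow]
  -- real moments
  set a : ℕ → ℝ := fun n => ∫ ω, |M n ω| ^ p ∂μ with ha_def
  have ha0 : ∀ n, 0 ≤ a n := fun n => integral_nonneg fun ω => by positivity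
  have hL : ∀ n, ∫⁻ ω, (‖M n ω‖₊ : ℝ≥0∞) ^ p ∂μ = ENNReal.ofReal (a n) := by
    intro n
    rw [ha_def, ofReal_integral_eq_lintegral_ofReal (habs _ (hMmem n))
      (Filter.Eventually.of_forall fun ω => by positivity)]
    refine lintegral_congr fun ω => ?_
    rw [ENNReal.ofReal_pow (abs_nonneg _), ← Real.enorm_eq_ofReal_abs, enorm_eq_nnnorm]
  
  -- kappa and t
  have hpR : (0:ℝ) < p := by exact_mod_cast Nat.pos_of_ne_zero hp0
  set κ : ℝ := K ^ ((1 : ℝ) / p) with hκ_def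
  have hκ0 : 0 ≤ κ := Real.rpow_nonneg hK.le _
  have hκp : κ ^ p = K := by
    rw [hκ_def, ← Real.rpow_natCast (K ^ ((1:ℝ)/p)) p, ← Real.rpow_mul hK.le,
      one_div, inv_mul_cancel₀ hpR.ne', Real.rpow_one]
  set t : ℕ → ℝ := fun n => a n ^ ((1 : ℝ) / p) with ht_def
  have ht0 : ∀ n, 0 ≤ t n := fun n => Real.rpow_nonneg (ha0 n) _
  have htp : ∀ n, t n ^ p = a n := fun n => by
    rw [ht_def, ← Real.rpow_natCast (a n ^ ((1:ℝ)/p)) p, ← Real.rpow_mul (ha0 n),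
      one_div, inv_mul_cancel₀ hpR.ne', Real.rpow_one]
  -- integrability of the terms in the binomial expansion
  have hζabs : ∀ n, Integrable (fun ω => |ζ n ω| ^ p) μ := fun n => habs _ (hζmem n)
  have hMabs : ∀ n, Integrable (fun ω => |M n ω| ^ p) μ := fun n => habs _ (hMmem n)
  have hint : ∀ n k, k ≤ p → Integrable (fun ω => M n ω ^ (p - k) * ζ n ω ^ k) μ := by
    intro n k hk
    refine Integrable.mono' ((hMabs n).add (hζabs n))
      (((hSM n).pow _).mul ((hζSM n).pow _)).aestronglyMeasurable
      (Filter.Eventually.of_forall fun ω => ?_)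
    rw [Real.norm_eq_abs, abs_mul, abs_pow, abs_pow]
    exact aux_young hk
  have hintabs : ∀ n k, k ≤ p → Integrable (fun ω => |M n ω| ^ (p - k) * |ζ n ω| ^ k) μ := by
    intro n k hk
    refine Integrable.mono' ((hMabs n).add (hζabs n))
      ((((hSM n).measurable.abs.pow_const _).mul
        ((hζSM n).measurable.abs.pow_const _)).aestronglyMeasurable)
      (Filter.Eventually.of_forall fun ω => ?_)
    rw [Real.norm_eq_abs, abs_mul, abs_pow, abs_pow, abs_abs, abs_abs]
    exact aux_young hk
  -- the lintegral of |zeta|^p as a real bound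
  have hLζ : ∀ n, ∫⁻ ω, (‖ζ n ω‖₊ : ℝ≥0∞) ^ p ∂μ = ENNReal.ofReal (∫ ω, |ζ n ω| ^ p ∂μ) := by
    intro n
    rw [ofReal_integral_eq_lintegral_ofReal (hζabs n)
      (Filter.Eventually.of_forall fun ω => by positivity)]
    refine lintegral_congr fun ω => ?_
    rw [ENNReal.ofReal_pow (abs_nonneg _), ← Real.enorm_eq_ofReal_abs, enorm_eq_nnnorm]
  -- Hölder bound for each term
  have hterm : ∀ n k, 1 ≤ k → k ≤ p →
      ∫ ω, |M n ω| ^ (p - k) * |ζ n ω| ^ k ∂μ ≤ t n ^ (p - k) * κ ^ k := by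
    intro n k hk1 hkp
    by_cases hkeq : k = p
    · -- k = p
      subst hkeq
      simp only [Nat.sub_self, pow_zero, one_mul]
      rw [hκp]
      have h2 := (hLζ n).symm.trans_le (hmomζ n)
      exact (ENNReal.ofReal_le_ofReal_iff hK.le).mp h2
    · -- k < p
      have hklt := lt_of_le_of_ne hkp hkeq
      have hmeasM : AEMeasurable (fun ω => (‖M n ω‖₊ : ℝ≥0∞)) μ :=
        ((hSM n).measurable.nnnorm.coe_nnreal_ennreal).aemeasurable
      have hmeasζ : AEMeasurable (fun ω => (‖ζ n ω‖₊ : ℝ≥0∞)) μ :=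
        ((hζSM n).measurable.nnnorm.coe_nnreal_ennreal).aemeasurable
      have H := aux_holder μ hmeasM hmeasζ hk1 hklt
      have hofReal : ENNReal.ofReal (∫ ω, |M n ω| ^ (p - k) * |ζ n ω| ^ k ∂μ)
          = ∫⁻ ω, (‖M n ω‖₊ : ℝ≥0∞) ^ (p - k) * (‖ζ n ω‖₊ : ℝ≥0∞) ^ k ∂μ := by
        rw [ofReal_integral_eq_lintegral_ofReal (hintabs n k hkp)
          (Filter.Eventually.of_forall fun ω => by positivity)]
        refine lintegral_congr fun ω => ?_
        rw [ENNReal.ofReal_mul (by positivity), ENNReal.ofReal_pow (abs_nonneg _),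
          ENNReal.ofReal_pow (abs_nonneg _), ← Real.enorm_eq_ofReal_abs, enorm_eq_nnnorm,
          ← Real.enorm_eq_ofReal_abs, enorm_eq_nnnorm]
      have hexps1 : (0:ℝ) ≤ ((p:ℝ) - k) / p := by
        have : (k:ℝ) ≤ p := by exact_mod_cast hkp
        exact div_nonneg (by linarith) hpR.le
      have hexps2 : (0:ℝ) ≤ (k:ℝ) / p := by positivity
      have H2 : ENNReal.ofReal (∫ ω, |M n ω| ^ (p - k) * |ζ n ω| ^ k ∂μ)
          ≤ ENNReal.ofReal (a n ^ (((p:ℝ) - k) / p) * K ^ ((k:ℝ) / p)) := by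
        rw [hofReal]
        refine H.trans ?_
        rw [hL n]
        calc ENNReal.ofReal (a n) ^ (((p:ℝ) - k) / p)
              * (∫⁻ ω, (‖ζ n ω‖₊ : ℝ≥0∞) ^ p ∂μ) ^ ((k:ℝ) / p)
            ≤ ENNReal.ofReal (a n) ^ (((p:ℝ) - k) / p)
              * ENNReal.ofReal K ^ ((k:ℝ) / p) := by
              gcongr
              exact hmomζ n
        _ = ENNReal.ofReal (a n ^ (((p:ℝ) - k) / p) * K ^ ((k:ℝ) / p)) := by
              rw [ENNReal.ofReal_rpow_of_nonneg (ha0 n) hexps1,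
                ENNReal.ofReal_rpow_of_nonneg hK.le hexps2,
                ENNReal.ofReal_mul (Real.rpow_nonneg (ha0 n) _)]
      have H3 : (∫ ω, |M n ω| ^ (p - k) * |ζ n ω| ^ k ∂μ)
          ≤ a n ^ (((p:ℝ) - k) / p) * K ^ ((k:ℝ) / p) :=
        (ENNReal.ofReal_le_ofReal_iff
          (mul_nonneg (Real.rpow_nonneg (ha0 n) _) (Real.rpow_nonneg hK.le _))).mp H2
      refine H3.trans_eq ?_
      have e1 : t n ^ (p - k) = a n ^ (((p:ℝ) - k) / p) := by
        rw [ht_def, ← Real.rpow_natCast (a n ^ ((1:ℝ)/p)) (p - k),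
          ← Real.rpow_mul (ha0 n)]
        congr 1
        rw [Nat.cast_sub hkp]
        field_simp
      have e2 : κ ^ k = K ^ ((k:ℝ) / p) := by
        rw [hκ_def, ← Real.rpow_natCast (K ^ ((1:ℝ)/p)) k, ← Real.rpow_mul hK.le]
        congr 1
        field_simp
      rw [e1, e2]
  -- the cross term vanishes
  have hcross : ∀ n, ∫ ω, M n ω ^ (p - 1) * ζ n ω ∂μ = 0 := by
    intro n
    have hζint : Integrable (ζ n) μ := (hM.integrable (n+1)).sub (hM.integrable n)
    have hmul : Integrable ((fun ω => M n ω ^ (p - 1)) * ζ n) μ := by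
      have h := hint n 1 (by omega)
      refine h.congr (Filter.Eventually.of_forall fun ω => ?_)
      simp [pow_one]
    have hst : StronglyMeasurable[ℱ n] (fun ω => M n ω ^ (p - 1)) :=
      (hM.stronglyAdapted n).pow _
    have hceζ : μ[ζ n | ℱ n] =ᵐ[μ] 0 := by
      have h2 : μ[ζ n | ℱ n] =ᵐ[μ] μ[M (n+1) | ℱ n] - μ[M n | ℱ n] :=
        condExp_sub (hM.integrable (n+1)) (hM.integrable n) _
      have h1 : μ[M (n+1) | ℱ n] =ᵐ[μ] M n := hM.2 n (n+1) (Nat.le_succ n)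
      have h3 : μ[M n | ℱ n] = M n :=
        condExp_of_stronglyMeasurable (ℱ.le n) (hM.stronglyAdapted n) (hM.integrable n)
      filter_upwards [h2, h1] with ω h2ω h1ω
      rw [Pi.zero_apply, h2ω, Pi.sub_apply, h1ω, h3, sub_self]
    have hpull := condExp_mul_of_stronglyMeasurable_left hst hmul hζint
    have hzero : μ[(fun ω => M n ω ^ (p - 1)) * ζ n | ℱ n] =ᵐ[μ] 0 := by
      refine hpull.trans ?_
      filter_upwards [hceζ] with ω hω
      simp only [Pi.mul_apply, Pi.zero_apply] at hω ⊢
      rw [hω, mul_zero]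
    calc ∫ ω, M n ω ^ (p - 1) * ζ n ω ∂μ
        = ∫ ω, ((fun ω => M n ω ^ (p - 1)) * ζ n) ω ∂μ := rfl
    _ = ∫ ω, (μ[(fun ω => M n ω ^ (p - 1)) * ζ n | ℱ n]) ω ∂μ :=
        (integral_condExp (ℱ.le n)).symm
    _ = ∫ ω, (0 : Ω → ℝ) ω ∂μ := integral_congr_ae hzero
    _ = 0 := by simp
  -- the recursion
  have heven : Even p := ⟨N, by omega⟩
  have hrec : ∀ n, a (n + 1) ≤ a n
      + ∑ k ∈ Icc 2 p, (t n ^ (p - k) * κ ^ k) * (p.choose k : ℝ) := by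
    intro n
    have hexp : a (n + 1) = ∑ k ∈ range (p + 1),
        (∫ ω, M n ω ^ (p - k) * ζ n ω ^ k ∂μ) * (p.choose k : ℝ) := by
      have e : ∀ ω, |M (n+1) ω| ^ p
          = ∑ k ∈ range (p + 1), M n ω ^ (p - k) * ζ n ω ^ k * (p.choose k : ℝ) := by
        intro ω
        rw [heven.pow_abs]
        have hMs : M (n+1) ω = M n ω + ζ n ω := by simp [hζ_def]
        rw [hMs, add_pow]
        conv_rhs => rw [← Finset.sum_range_reflect]
        refine Finset.sum_congr rfl fun k hk => ?_
        have hk' : k ≤ p := by simpa [Nat.lt_succ_iff] using hk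
        have h1 : p + 1 - 1 - k = p - k := by omega
        rw [h1, Nat.sub_sub_self hk', Nat.choose_symm hk']
      calc a (n + 1) = ∫ ω, ∑ k ∈ range (p + 1),
            M n ω ^ (p - k) * ζ n ω ^ k * (p.choose k : ℝ) ∂μ :=
          integral_congr_ae (Filter.Eventually.of_forall e)
      _ = ∑ k ∈ range (p + 1), ∫ ω, M n ω ^ (p - k) * ζ n ω ^ k * (p.choose k : ℝ) ∂μ :=
          integral_finset_sum _ (fun k hk =>
            (hint n k (by simp [Nat.lt_succ_iff] at hk; omega)).mul_const _)
      _ = ∑ k ∈ range (p + 1), (∫ ω, M n ω ^ (p - k) * ζ n ω ^ k ∂μ) * (p.choose k : ℝ) := by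
          refine Finset.sum_congr rfl fun k _ => ?_
          exact integral_mul_const _ _
    have hsplit : range (p + 1) = insert 0 (insert 1 (Icc 2 p)) := by
      ext x
      simp only [Finset.mem_range, Finset.mem_insert, Finset.mem_Icc, Nat.lt_succ_iff]
      omega
    have h0mem : (0:ℕ) ∉ insert 1 (Icc 2 p) := by simp
    have h1mem : (1:ℕ) ∉ Icc 2 p := by simp
    rw [hexp, hsplit, Finset.sum_insert h0mem, Finset.sum_insert h1mem]
    have e0 : (∫ ω, M n ω ^ (p - 0) * ζ n ω ^ 0 ∂μ) * (p.choose 0 : ℝ) = a n := by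
      simp only [Nat.sub_zero, pow_zero, mul_one, Nat.choose_zero_right, Nat.cast_one]
      refine integral_congr_ae (Filter.Eventually.of_forall fun ω => ?_)
      show M n ω ^ p = |M n ω| ^ p
      rw [heven.pow_abs]
    have e1 : (∫ ω, M n ω ^ (p - 1) * ζ n ω ^ 1 ∂μ) * (p.choose 1 : ℝ) = 0 := by
      have : (∫ ω, M n ω ^ (p - 1) * ζ n ω ^ 1 ∂μ) = 0 := by
        rw [← hcross n]
        refine integral_congr_ae (Filter.Eventually.of_forall fun ω => ?_)
        show M n ω ^ (p - 1) * ζ n ω ^ 1 = M n ω ^ (p - 1) * ζ n ω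
        rw [pow_one]
      rw [this, zero_mul]
    rw [e0, e1, zero_add]
    refine add_le_add_right (Finset.sum_le_sum fun k hk => ?_) (a n)
    rw [Finset.mem_Icc] at hk
    refine mul_le_mul_of_nonneg_right ?_ (Nat.cast_nonneg _)
    calc (∫ ω, M n ω ^ (p - k) * ζ n ω ^ k ∂μ)
        ≤ ∫ ω, |M n ω| ^ (p - k) * |ζ n ω| ^ k ∂μ := by
          refine integral_mono (hint n k hk.2) (hintabs n k hk.2) fun ω => ?_
          calc M n ω ^ (p - k) * ζ n ω ^ k ≤ |M n ω ^ (p - k) * ζ n ω ^ k| := le_abs_self _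
          _ = |M n ω| ^ (p - k) * |ζ n ω| ^ k := by rw [abs_mul, abs_pow, abs_pow]
    _ ≤ t n ^ (p - k) * κ ^ k := hterm n k (by omega) hk.2
  
  -- base case and constants
  set E : ℝ := max κ 1 with hE_def
  have hE1 : (1:ℝ) ≤ E := le_max_right _ _
  have hκE : κ ≤ E := le_max_left _ _
  have hE0 : (0:ℝ) ≤ E := zero_le_one.trans hE1
  have h2p1 : (1:ℝ) ≤ 2 ^ p := one_le_pow₀ one_le_two
  set D : ℝ := 2 ^ p * E with hD_def
  have hD0 : (0:ℝ) ≤ D := by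
    rw [hD_def]; exact mul_nonneg (by positivity) hE0
  have hbase : a 1 ≤ K := by
    have hz : ζ 0 = M 1 := by
      funext ω; simp [hζ_def, hM0]
    have h := (hLζ 0).symm.trans_le (hmomζ 0)
    rw [hz] at h
    exact (ENNReal.ofReal_le_ofReal_iff hK.le).mp h
  have hKD : K ≤ D ^ p := by
    rw [← hκp]
    refine pow_le_pow_left₀ hκ0 ?_ p
    calc κ ≤ E := hκE
    _ = 1 * E := (one_mul E).symm
    _ ≤ 2 ^ p * E := mul_le_mul_of_nonneg_right h2p1 hE0
  have key : ∀ n, 1 ≤ n → a n ≤ D ^ p * (n : ℝ) ^ N := by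
    intro n
    induction n with
    | zero => intro h; exact absurd h (by omega)
    | succ m ih =>
      intro _
      rcases Nat.eq_zero_or_pos m with rfl | hm
      · simpa using hbase.trans hKD
      · have iha := ih hm
        have hm1 : (1:ℝ) ≤ (m:ℝ) := by exact_mod_cast hm
        have hm0 : (0:ℝ) ≤ (m:ℝ) := by linarith
        set s : ℝ := Real.sqrt m with hs_def
        have hs1 : (1:ℝ) ≤ s := by
          have h := Real.sqrt_le_sqrt hm1
          rwa [Real.sqrt_one] at h
        have hs0 : (0:ℝ) ≤ s := zero_le_one.trans hs1
        have hs2 : s ^ 2 = (m:ℝ) := Real.sq_sqrt hm0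
        have hsp : s ^ p = (m:ℝ) ^ N := by rw [hp_def, pow_mul, hs2]
        have hsp2 : s ^ (p - 2) = (m:ℝ) ^ (N - 1) := by
          rw [show p - 2 = 2 * (N - 1) by omega, pow_mul, hs2]
        have htm : t m ≤ D * s := by
          refine (pow_le_pow_iff_left₀ (ht0 m) (mul_nonneg hD0 hs0) hp0).mp ?_
          rw [htp m, mul_pow, hsp]
          exact iha
        have hterm2 : ∀ k ∈ Icc 2 p,
            (t m ^ (p - k) * κ ^ k) * (p.choose k : ℝ) * 2 ^ p
              ≤ D ^ p * (m:ℝ) ^ (N - 1) := by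
          intro k hk
          rw [Finset.mem_Icc] at hk
          have hchoose : (p.choose k : ℝ) ≤ 2 ^ p := by exact_mod_cast aux_choose_le
          have e1 : t m ^ (p - k) ≤ (D * s) ^ (p - k) :=
            pow_le_pow_left₀ (ht0 m) htm _
          have e2 : κ ^ k ≤ E ^ k := pow_le_pow_left₀ hκ0 hκE _
          have step1 : (t m ^ (p - k) * κ ^ k) * (p.choose k : ℝ)
              ≤ ((D * s) ^ (p - k) * E ^ k) * 2 ^ p := by
            refine mul_le_mul ?_ hchoose (Nat.cast_nonneg _)
              (mul_nonneg (pow_nonneg (mul_nonneg hD0 hs0) _) (pow_nonneg hE0 _))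
            exact mul_le_mul e1 e2 (pow_nonneg hκ0 _)
              (pow_nonneg (mul_nonneg hD0 hs0) _)
          have step2 : (t m ^ (p - k) * κ ^ k) * (p.choose k : ℝ) * 2 ^ p
              ≤ ((D * s) ^ (p - k) * E ^ k) * 2 ^ p * 2 ^ p :=
            mul_le_mul_of_nonneg_right step1 (by positivity)
          refine step2.trans ?_
          have hsk : s ^ (p - k) ≤ s ^ (p - 2) := pow_le_pow_right₀ hs1 (by omega)
          have h2pk : (2:ℝ) ^ p * 2 ^ p ≤ ((2:ℝ) ^ p) ^ k := by
            calc (2:ℝ) ^ p * 2 ^ p = ((2:ℝ) ^ p) ^ 2 := (sq _).symm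
            _ ≤ ((2:ℝ) ^ p) ^ k := pow_le_pow_right₀ h2p1 hk.1
          have hDdec : D ^ (p - k) * (((2:ℝ) ^ p) ^ k * E ^ k) = D ^ p := by
            rw [← mul_pow, ← hD_def, ← pow_add]
            congr 1
            omega
          calc ((D * s) ^ (p - k) * E ^ k) * 2 ^ p * 2 ^ p
              = (D ^ (p - k) * E ^ k) * (s ^ (p - k) * ((2:ℝ) ^ p * 2 ^ p)) := by
                rw [mul_pow]; ring
          _ ≤ (D ^ (p - k) * E ^ k) * (s ^ (p - 2) * ((2:ℝ) ^ p) ^ k) := by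
                refine mul_le_mul_of_nonneg_left ?_
                  (mul_nonneg (pow_nonneg hD0 _) (pow_nonneg hE0 _))
                exact mul_le_mul hsk h2pk (by positivity) (pow_nonneg hs0 _)
          _ = D ^ p * (m:ℝ) ^ (N - 1) := by
                rw [← hsp2, ← hDdec]; ring
        have hsum : ∑ k ∈ Icc 2 p, (t m ^ (p - k) * κ ^ k) * (p.choose k : ℝ)
            ≤ D ^ p * (m:ℝ) ^ (N - 1) := by
          have hcard : (Icc 2 p).card = p - 1 := by rw [Nat.card_Icc]; omega
          have hbodynn : (0:ℝ) ≤ D ^ p * (m:ℝ) ^ (N - 1) / 2 ^ p :=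
            div_nonneg (mul_nonneg (pow_nonneg hD0 _) (pow_nonneg hm0 _)) (by positivity)
          calc ∑ k ∈ Icc 2 p, (t m ^ (p - k) * κ ^ k) * (p.choose k : ℝ)
              ≤ ∑ _k ∈ Icc 2 p, D ^ p * (m:ℝ) ^ (N - 1) / 2 ^ p := by
                refine Finset.sum_le_sum fun k hk => ?_
                rw [le_div_iff₀ (by positivity)]
                exact hterm2 k hk
          _ = ((p - 1 : ℕ):ℝ) * (D ^ p * (m:ℝ) ^ (N - 1) / 2 ^ p) := by
                rw [Finset.sum_const, hcard, nsmul_eq_mul]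
          _ ≤ 2 ^ p * (D ^ p * (m:ℝ) ^ (N - 1) / 2 ^ p) := by
                refine mul_le_mul_of_nonneg_right ?_ hbodynn
                have : (p - 1 : ℕ) ≤ 2 ^ p := (Nat.sub_le p 1).trans (Nat.lt_two_pow_self (n := p)).le
                calc ((p - 1 : ℕ):ℝ) ≤ ((2 ^ p : ℕ):ℝ) := by exact_mod_cast this
                _ = 2 ^ p := by push_cast; ring
          _ = D ^ p * (m:ℝ) ^ (N - 1) := by
                field_simp
        have hmono : (m:ℝ) ^ N + (m:ℝ) ^ (N - 1) ≤ ((m:ℝ) + 1) ^ N := by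
          have e : (m:ℝ) ^ N = (m:ℝ) ^ (N - 1) * m := by
            rw [← pow_succ]; congr 1; omega
          have e2 : ((m:ℝ) + 1) ^ N = ((m:ℝ) + 1) ^ (N - 1) * ((m:ℝ) + 1) := by
            rw [← pow_succ]; congr 1; omega
          rw [e, e2]
          calc (m:ℝ) ^ (N - 1) * m + (m:ℝ) ^ (N - 1)
              = (m:ℝ) ^ (N - 1) * ((m:ℝ) + 1) := by ring
          _ ≤ ((m:ℝ) + 1) ^ (N - 1) * ((m:ℝ) + 1) := by
              refine mul_le_mul_of_nonneg_right
                (pow_le_pow_left₀ hm0 (by linarith) _) (by linarith)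
        calc a (m + 1) ≤ a m
            + ∑ k ∈ Icc 2 p, (t m ^ (p - k) * κ ^ k) * (p.choose k : ℝ) := hrec m
        _ ≤ D ^ p * (m:ℝ) ^ N + D ^ p * (m:ℝ) ^ (N - 1) := add_le_add iha hsum
        _ = D ^ p * ((m:ℝ) ^ N + (m:ℝ) ^ (N - 1)) := by ring
        _ ≤ D ^ p * ((m:ℝ) + 1) ^ N :=
            mul_le_mul_of_nonneg_left hmono (pow_nonneg hD0 _)
        _ = D ^ p * ((m + 1 : ℕ):ℝ) ^ N := by push_cast; ring
  refine ⟨D ^ p, fun n hn => ?_⟩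
  calc ∫⁻ ω, (‖M n ω‖₊ : ℝ≥0∞) ^ p ∂μ = ENNReal.ofReal (a n) := hL n
  _ ≤ ENNReal.ofReal (D ^ p * (n:ℝ) ^ N) := ENNReal.ofReal_le_ofReal (key n hn)
end

section
/- Let (ξ_j)_{j≥1} be a sequence of real-valued random variables on a probability space such that E(ξ_{j+1} | σ(ξ_1, …, ξ_j)) ≤ 0 almost surely for every j ≥ 1, and such that for every positive integer N the sequence (E|ξ_j|^N)_j is bounded. Then for every ε > 0, almost surely ξ_1 + ξ_2 + ⋯ + ξ_n < ε n for all sufficiently large n. -/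
open MeasureTheory Finset
open scoped ENNReal

open scoped NNReal

lemma integrable_mul_of_memLp_two' {α : Type*} [m0 : MeasurableSpace α] {μ : Measure α}
    {f g : α → ℝ} (hf : MemLp f 2 μ) (hg : MemLp g 2 μ) :
    Integrable (f * g) μ := by
  refine ((hf.integrable_sq.add hg.integrable_sq).div_const 2).mono'
    (hf.aestronglyMeasurable.mul hg.aestronglyMeasurable) (ae_of_all _ fun x => ?_)
  simp only [Pi.mul_apply, Pi.add_apply, Pi.div_apply, Real.norm_eq_abs, abs_mul]
  nlinarith [sq_nonneg (|f x| - |g x|), sq_abs (f x), sq_abs (g x), abs_nonneg (f x),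
    abs_nonneg (g x)]

lemma memLp_two_condexp_aux {α : Type*} {m : MeasurableSpace α} [m0 : MeasurableSpace α]
    {μ : Measure α} [IsFiniteMeasure μ] (hm : m ≤ m0)
    {f : α → ℝ} (hf : MemLp f 2 μ) : MemLp (μ[f|m]) 2 μ := by
  have hG : MemLp ((condExpL2 ℝ ℝ hm (hf.toLp f) : α →₂[μ] ℝ) : α → ℝ) 2 μ :=
    Lp.memLp (μ := μ) _
  have heq : μ[f|m] =ᵐ[μ] ((condExpL2 ℝ ℝ hm (hf.toLp f) : α →₂[μ] ℝ) : α → ℝ) := by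
    refine (ae_eq_condExp_of_forall_setIntegral_eq hm (hf.integrable one_le_two)
      (fun s _ _ => (hG.integrable one_le_two).integrableOn)
      (fun s hs hμs => ?_) (lpMeas.aestronglyMeasurable _)).symm
    rw [integral_condExpL2_eq hm (hf.toLp f) hs hμs.ne]
    exact integral_congr_ae (ae_restrict_of_ae ((hf.coeFn_toLp)))
  exact hG.ae_eq heq.symm


theorem aux_mart {Ω : Type*} [m0 : MeasurableSpace Ω] {μ : Measure Ω} [IsProbabilityMeasure μ]
    (F : Filtration ℕ m0) (d : ℕ → Ω → ℝ)
    (hd : ∀ j, 2 ≤ j → MemLp (d j) 2 μ)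
    (hadp : ∀ j n, 2 ≤ j → j ≤ n → StronglyMeasurable[F n] (d j))
    (hcnd : ∀ n, 1 ≤ n → μ[d (n+1) | F n] =ᵐ[μ] 0)
    (K : ℝ) (hK : ∀ j, 2 ≤ j → ∫ ω, d j ω ^ 2 ∂μ ≤ K)
    {ε : ℝ} (hε : 0 < ε) :
    ∀ᵐ ω ∂μ, ∃ n₀ : ℕ, ∀ n ≥ n₀, (∑ j ∈ Finset.Icc 2 n, d j ω) < ε * n := by
  have hK0 : 0 ≤ K := le_trans (integral_nonneg fun ω => sq_nonneg _) (hK 2 le_rfl)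
  set M : ℕ → Ω → ℝ := fun n ω => ∑ j ∈ Finset.Icc 2 n, d j ω with hMdef
  have hMsm : ∀ n, StronglyMeasurable[F n] (M n) := fun n =>
    Finset.stronglyMeasurable_fun_sum _ fun j hj => hadp j n (mem_Icc.1 hj).1 (mem_Icc.1 hj).2
  have hMmem : ∀ n, MemLp (M n) 2 μ := fun n =>
    memLp_finset_sum _ fun j hj => hd j (mem_Icc.1 hj).1
  have hMsucc : ∀ n, 1 ≤ n → ∀ ω, M (n+1) ω = M n ω + d (n+1) ω := by
    intro n hn ω
    simp only [hMdef]
    exact Finset.sum_Icc_succ_top (by omega) _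
  have hM0 : ∀ ω, M 0 ω = 0 := fun ω => by
    simp [hMdef, Finset.Icc_eq_empty (show ¬(2:ℕ) ≤ 0 by omega)]
  have hM1 : ∀ ω, M 1 ω = 0 := fun ω => by
    simp [hMdef, Finset.Icc_eq_empty (show ¬(2:ℕ) ≤ 1 by omega)]
  have hMsqsm : ∀ n, StronglyMeasurable[F n] (fun ω => M n ω ^ 2) := by
    intro n
    have : (fun ω => M n ω ^ 2) = M n * M n := funext fun ω => pow_two _
    rw [this]; exact (hMsm n).mul (hMsm n)
  -- the submartingale property of M^2
  have hstep : ∀ n, (fun ω => M n ω ^ 2) ≤ᵐ[μ] μ[(fun ω => M (n+1) ω ^ 2) | F n] := by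
    intro n
    rcases Nat.eq_zero_or_pos n with rfl | hn
    · have h1 : (fun ω => M 1 ω ^ 2) = (0 : Ω → ℝ) := funext fun ω => by simp [hM1 ω]
      have h0 : (fun ω => M 0 ω ^ 2) = (0 : Ω → ℝ) := funext fun ω => by simp [hM0 ω]
      rw [h1, h0, condExp_zero]
    · have h2n : (2:ℕ) ≤ n + 1 := by omega
      have hdm := hd (n+1) h2n
      have hdint : Integrable (d (n+1)) μ := hdm.integrable one_le_two
      have hM2 : Integrable (fun ω => M n ω ^ 2) μ := (hMmem n).integrable_sq
      have hMd : Integrable (M n * d (n+1)) μ := integrable_mul_of_memLp_two' (hMmem n) hdm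
      have hd2 : Integrable (fun ω => d (n+1) ω ^ 2) μ := hdm.integrable_sq
      have hexp : (fun ω => M (n+1) ω ^ 2)
          = (fun ω => M n ω ^ 2) + (2:ℝ) • (M n * d (n+1)) + (fun ω => d (n+1) ω ^ 2) := by
        funext ω
        simp only [Pi.add_apply, Pi.smul_apply, Pi.mul_apply, smul_eq_mul, hMsucc n hn ω]
        ring
      have e2 : μ[(fun ω => M (n+1) ω ^ 2) | F n]
          =ᵐ[μ] μ[(fun ω => M n ω ^ 2) | F n] + μ[(2:ℝ) • (M n * d (n+1)) | F n]
            + μ[(fun ω => d (n+1) ω ^ 2) | F n] := by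
        rw [hexp]
        exact (condExp_add (hM2.add (hMd.smul (2:ℝ))) hd2 (m := F n)).trans
          ((condExp_add hM2 (hMd.smul (2:ℝ)) (m := F n)).add Filter.EventuallyEq.rfl)
      have eA : μ[(fun ω => M n ω ^ 2) | F n] = fun ω => M n ω ^ 2 :=
        condExp_of_stronglyMeasurable (F.le n) (hMsqsm n) hM2
      have eB : μ[(2:ℝ) • (M n * d (n+1)) | F n] =ᵐ[μ] 0 := by
        refine (condExp_smul (2:ℝ) (M n * d (n+1)) (m := F n)).trans ?_
        have h3 := condExp_mul_of_stronglyMeasurable_left (hMsm n) hMd hdint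
        filter_upwards [h3, hcnd n hn] with ω h3ω hcω
        simp only [Pi.smul_apply, smul_eq_mul, h3ω, Pi.mul_apply, hcω, Pi.zero_apply, mul_zero]
      have eC : (0 : Ω → ℝ) ≤ᵐ[μ] μ[(fun ω => d (n+1) ω ^ 2) | F n] :=
        condExp_nonneg (ae_of_all _ fun ω => sq_nonneg _)
      filter_upwards [e2, eB, eC] with ω h2ω hBω hCω
      rw [h2ω, Pi.add_apply, Pi.add_apply, eA, hBω, Pi.zero_apply]
      simpa using hCω
  have hsubm : Submartingale (fun n ω => M n ω ^ 2) F μ :=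
    submartingale_nat (fun n => hMsqsm n) (fun n => (hMmem n).integrable_sq) hstep
  -- integral bound
  have hIbound : ∀ n, ∫ ω, M n ω ^ 2 ∂μ ≤ K * n := by
    intro n
    induction n with
    | zero =>
      simp only [hM0]
      simp
    | succ n ih =>
      rcases Nat.eq_zero_or_pos n with rfl | hn
      · simp only [hM1]
        simp [hK0]
      · have h2n : (2:ℕ) ≤ n + 1 := by omega
        have hdm := hd (n+1) h2n
        have hdint : Integrable (d (n+1)) μ := hdm.integrable one_le_two
        have hM2 : Integrable (fun ω => M n ω ^ 2) μ := (hMmem n).integrable_sq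
        have hMd : Integrable (M n * d (n+1)) μ := integrable_mul_of_memLp_two' (hMmem n) hdm
        have hd2 : Integrable (fun ω => d (n+1) ω ^ 2) μ := hdm.integrable_sq
        have hzero : ∫ ω, (M n * d (n+1)) ω ∂μ = 0 := by
          rw [← integral_condExp (F.le n) (f := M n * d (n+1))]
          have h3 := condExp_mul_of_stronglyMeasurable_left (hMsm n) hMd hdint
          have h4 : μ[M n * d (n+1) | F n] =ᵐ[μ] 0 := by
            filter_upwards [h3, hcnd n hn] with ω h3ω hcω
            simp only [h3ω, Pi.mul_apply, hcω, Pi.zero_apply, mul_zero]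
          rw [integral_congr_ae h4]
          simp
        have hsplit : ∫ ω, M (n+1) ω ^ 2 ∂μ
            = (∫ ω, M n ω ^ 2 ∂μ) + (2:ℝ) * (∫ ω, (M n * d (n+1)) ω ∂μ)
              + ∫ ω, d (n+1) ω ^ 2 ∂μ := by
          have : ∀ ω, M (n+1) ω ^ 2
              = M n ω ^ 2 + (2:ℝ) * ((M n * d (n+1)) ω) + d (n+1) ω ^ 2 := by
            intro ω
            simp only [Pi.mul_apply, hMsucc n hn ω]
            ring
          rw [integral_congr_ae (ae_of_all _ this)]
          have hint1 : Integrable (fun a => M n a ^ 2 + 2 * (M n * d (n+1)) a) μ :=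
            hM2.add (hMd.const_mul 2)
          rw [integral_add hint1 hd2, integral_add hM2 (hMd.const_mul 2), integral_const_mul]
        rw [hsplit, hzero]
        have hdK := hK (n+1) h2n
        push_cast
        linarith
  -- blocks via Doob maximal inequality
  set c2 : ℝ := 36 * K / ε ^ 2 with hc2
  have hc20 : 0 ≤ c2 := div_nonneg (by linarith) (by positivity)
  set E : ℕ → Set Ω := fun m => {ω | ∃ k, k ≤ (m+2)^2 ∧ (ε/2) * ((m:ℝ)+1)^2 ≤ M k ω}
    with hEdef
  have hEbound : ∀ m : ℕ, μ (E m) ≤ ENNReal.ofReal (c2 / ((m:ℝ)+1)^2) := by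
    intro m
    set N : ℕ := (m+2)^2 with hN
    set a : ℝ := (ε/2) * ((m:ℝ)+1)^2 with ha
    have ha0 : 0 < a := by positivity
    set c : ℝ≥0 := (a^2).toNNReal with hc
    have hcc : (c : ℝ) = a ^ 2 := Real.coe_toNNReal _ (sq_nonneg a)
    have hc0 : c ≠ 0 := by
      simp only [hc, ne_eq, Real.toNNReal_eq_zero, not_le]
      positivity
    have hsub : E m ⊆ {ω | (c:ℝ) ≤ (range (N+1)).sup' nonempty_range_add_one
        fun k => M k ω ^ 2} := by
      rintro ω ⟨k, hk, hka⟩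
      have h1 : a ^ 2 ≤ M k ω ^ 2 := pow_le_pow_left₀ ha0.le hka 2
      refine Set.mem_setOf.2 (le_trans (by rw [hcc]; exact h1)
        (Finset.le_sup' (f := fun k => M k ω ^ 2) (mem_range.mpr (by omega))))
    have hmax := maximal_ineq hsubm (fun n ω => sq_nonneg (M n ω)) (ε := c) N
    have hIN : ENNReal.ofReal (∫ ω in {ω | (c:ℝ) ≤ (range (N+1)).sup' nonempty_range_add_one
        fun k => M k ω ^ 2}, M N ω ^ 2 ∂μ) ≤ ENNReal.ofReal (K * N) := by
      refine ENNReal.ofReal_le_ofReal ?_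
      exact le_trans (setIntegral_le_integral ((hMmem N).integrable_sq)
        (ae_of_all _ fun ω => sq_nonneg _)) (hIbound N)
    have hmain : (c : ℝ≥0∞) * μ {ω | (c:ℝ) ≤ (range (N+1)).sup' nonempty_range_add_one
        fun k => M k ω ^ 2} ≤ ENNReal.ofReal (K * N) := by
      refine le_trans ?_ (le_trans hmax hIN)
      exact le_rfl
    have hreal : K * (N : ℝ) ≤ a ^ 2 * (c2 / ((m:ℝ)+1)^2) := by
      have hNcast : (N : ℝ) = ((m:ℝ)+2)^2 := by rw [hN]; push_cast; ring
      have heq : a ^ 2 * (c2 / ((m:ℝ)+1)^2) = 9 * K * ((m:ℝ)+1)^2 := by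
        rw [ha, hc2]
        have hm1 : ((m:ℝ)+1) ≠ 0 := by positivity
        field_simp
        ring
      rw [hNcast, heq]
      have hmpos : (0:ℝ) ≤ (m:ℝ) := Nat.cast_nonneg m
      nlinarith [mul_nonneg hK0 hmpos, mul_nonneg (mul_nonneg hK0 hmpos) hmpos]
    have hstep2 : ENNReal.ofReal (K * N) ≤ (c : ℝ≥0∞) * ENNReal.ofReal (c2 / ((m:ℝ)+1)^2) := by
      rw [← ENNReal.ofReal_coe_nnreal, ← ENNReal.ofReal_mul (by positivity), hcc]
      exact ENNReal.ofReal_le_ofReal hreal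
    have hfin : (c : ℝ≥0∞) * μ (E m) ≤ (c : ℝ≥0∞) * ENNReal.ofReal (c2 / ((m:ℝ)+1)^2) :=
      le_trans (mul_le_mul_right (measure_mono hsub) _) (le_trans hmain hstep2)
    exact (ENNReal.mul_le_mul_iff_right (by exact_mod_cast hc0) ENNReal.coe_ne_top).1 hfin
  -- Borel-Cantelli
  have hsummable : Summable (fun m : ℕ => c2 / ((m:ℝ)+1)^2) := by
    have h1 : Summable (fun m : ℕ => 1 / ((m:ℝ)+1)^2) := by
      have h := (summable_nat_add_iff 1).mpr (Real.summable_one_div_nat_pow.mpr one_lt_two)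
      refine h.congr fun m => ?_
      push_cast
      ring
    have h2 := h1.mul_left c2
    refine h2.congr fun m => ?_
    field_simp
  have hsum : (∑' m, μ (E m)) ≠ ⊤ := by
    refine ne_top_of_le_ne_top ?_ (ENNReal.tsum_le_tsum fun m => hEbound m)
    rw [← ENNReal.ofReal_tsum_of_nonneg (fun m => div_nonneg hc20 (by positivity)) hsummable]
    exact ENNReal.ofReal_ne_top
  have hBC := MeasureTheory.ae_eventually_notMem hsum
  filter_upwards [hBC] with ω hω
  obtain ⟨m₀, hm₀⟩ := Filter.eventually_atTop.1 hω
  refine ⟨(m₀+1)^2 + 1, fun n hn => ?_⟩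
  have hn1 : 1 ≤ n := le_trans (by nlinarith [Nat.one_le_pow 2 (m₀+1) (by omega)]) hn
  set b := Nat.sqrt (n-1) with hb
  have hb1 : m₀ + 1 ≤ b := Nat.le_sqrt'.mpr (Nat.le_pred_of_lt (Nat.lt_of_succ_le hn))
  set m := b - 1 with hm
  have hbm : b = m + 1 := by omega
  have hmm0 : m₀ ≤ m := by omega
  have hnub : n ≤ (m+2)^2 := by
    have h2 := Nat.lt_succ_sqrt' (n-1)
    have h3 : n - 1 + 1 = n := by omega
    calc n = (n-1) + 1 := h3.symm
      _ ≤ (b+1)^2 := h2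
      _ = (m+2)^2 := by rw [hbm]
  have hlb : (m+1)^2 ≤ n - 1 := by rw [← hbm]; exact Nat.sqrt_le' (n-1)
  have hnot : ω ∉ E m := hm₀ m hmm0
  have hMn : M n ω < (ε/2) * ((m:ℝ)+1)^2 := by
    by_contra h
    push_neg at h
    exact hnot ⟨n, hnub, h⟩
  have hcast : ((m:ℝ)+1)^2 ≤ (n : ℝ) := by
    have h4 : (m+1)^2 ≤ n := le_trans hlb (Nat.sub_le n 1)
    calc ((m:ℝ)+1)^2 = (((m+1)^2 : ℕ) : ℝ) := by push_cast; ring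
      _ ≤ (n : ℝ) := Nat.cast_le.mpr h4
  have hncast : (1:ℝ) ≤ (n:ℝ) := by exact_mod_cast hn1
  calc (∑ j ∈ Finset.Icc 2 n, d j ω) = M n ω := rfl
    _ < (ε/2) * ((m:ℝ)+1)^2 := hMn
    _ ≤ (ε/2) * n := by nlinarith
    _ < ε * n := by nlinarith

/-- Let (ξ_j)_{j≥1} satisfy E(ξ_{j+1} | σ(ξ_1,…,ξ_j)) ≤ 0 a.s. for every j ≥ 1,
and suppose for every positive integer N the sequence (E|ξ_j|^N)_j is bounded. Then for every
ε > 0, almost surely ξ_1 + ⋯ + ξ_n < ε n for all sufficiently large n. -/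
theorem stmt3
    {Ω : Type*} [MeasurableSpace Ω] {μ : Measure Ω} [IsProbabilityMeasure μ]
    (ξ : ℕ → Ω → ℝ) (hmeas : ∀ j, Measurable (ξ j))
    (hcond : ∀ j ≥ 1,
      μ[ξ (j + 1) | ⨆ i ∈ Finset.Icc 1 j, MeasurableSpace.comap (ξ i) (borel ℝ)] ≤ᵐ[μ] 0)
    (hmom : ∀ N : ℕ, 0 < N → ∃ B : ℝ≥0∞, B ≠ ⊤ ∧ ∀ j ≥ 1,
      ∫⁻ ω, ‖ξ j ω‖₊ ^ N ∂μ ≤ B) :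
    ∀ ε > (0 : ℝ), ∀ᵐ ω ∂μ, ∃ n₀ : ℕ, ∀ n ≥ n₀,
      (∑ j ∈ Finset.Icc 1 n, ξ j ω) < ε * n := by
  intro ε hε
  set F : Filtration ℕ ‹MeasurableSpace Ω› :=
    { seq := fun n => ⨆ i ∈ Finset.Icc 1 n, MeasurableSpace.comap (ξ i) (borel ℝ),
      mono' := fun n m hnm => biSup_mono fun i hi => Finset.Icc_subset_Icc_right hnm hi,
      le' := fun n => by
        refine iSup₂_le fun i _ => ?_
        rw [← BorelSpace.measurable_eq (α := ℝ)]
        exact measurable_iff_comap_le.mp (hmeas i) } with hFdef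
  have hcnd' : ∀ j, 1 ≤ j → μ[ξ (j+1) | F j] ≤ᵐ[μ] 0 := fun j hj => hcond j hj
  have hFm : ∀ i n, 1 ≤ i → i ≤ n → StronglyMeasurable[F n] (ξ i) := by
    intro i n h1 h2
    refine Measurable.stronglyMeasurable (measurable_iff_comap_le.mpr ?_)
    rw [BorelSpace.measurable_eq (α := ℝ)]
    exact le_biSup (fun i => MeasurableSpace.comap (ξ i) (borel ℝ)) (Finset.mem_Icc.mpr ⟨h1, h2⟩)
  obtain ⟨B, hBtop, hB⟩ := hmom 2 (by omega)
  set K := B.toReal with hKdef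
  have hK0 : 0 ≤ K := ENNReal.toReal_nonneg
  have hsq_int : ∀ j, 1 ≤ j → Integrable (fun ω => ξ j ω ^ 2) μ := by
    intro j hj
    refine ⟨((hmeas j).pow_const 2).aestronglyMeasurable, ?_⟩
    have h1 : ∀ a, (‖ξ j a ^ 2‖₊ : ℝ≥0∞) = (‖ξ j a‖₊ : ℝ≥0∞) ^ 2 := fun a => by
      rw [← ENNReal.coe_pow, nnnorm_pow]
    refine lt_of_le_of_lt ?_ (lt_of_le_of_lt (hB j hj) (lt_top_iff_ne_top.mpr hBtop))
    exact le_of_eq (lintegral_congr h1)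
  have hL2 : ∀ j, 1 ≤ j → MemLp (ξ j) 2 μ := fun j hj =>
    (memLp_two_iff_integrable_sq ((hmeas j).aestronglyMeasurable)).mpr (hsq_int j hj)
  have hKbound : ∀ j, 1 ≤ j → ∫ ω, ξ j ω ^ 2 ∂μ ≤ K := by
    intro j hj
    have h1 : ∫ ω, ξ j ω ^ 2 ∂μ = (∫⁻ ω, ENNReal.ofReal (ξ j ω ^ 2) ∂μ).toReal :=
      integral_eq_lintegral_of_nonneg_ae (ae_of_all _ fun ω => sq_nonneg _)
        ((hmeas j).pow_const 2).aestronglyMeasurable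
    have h2 : ∀ ω, ENNReal.ofReal (ξ j ω ^ 2) = (‖ξ j ω‖₊ : ℝ≥0∞) ^ 2 := by
      intro ω
      rw [← enorm_eq_nnnorm, Real.enorm_eq_ofReal_abs, ← ENNReal.ofReal_pow (abs_nonneg _), sq_abs]
    rw [h1, lintegral_congr h2]
    exact ENNReal.toReal_mono hBtop (hB j hj)
  set g : ℕ → Ω → ℝ := fun j => μ[ξ j | F (j-1)] with hgdef
  set d : ℕ → Ω → ℝ := fun j => ξ j - g j with hddef
  have hgmem : ∀ j, 2 ≤ j → MemLp (g j) 2 μ := fun j hj =>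
    memLp_two_condexp_aux (F.le (j-1)) (hL2 j (by omega))
  have hdmem : ∀ j, 2 ≤ j → MemLp (d j) 2 μ := fun j hj =>
    (hL2 j (by omega)).sub (hgmem j hj)
  have hgsm : ∀ j, StronglyMeasurable[F (j-1)] (g j) := fun j => stronglyMeasurable_condExp
  have hadp : ∀ j n, 2 ≤ j → j ≤ n → StronglyMeasurable[F n] (d j) := fun j n h2 hn =>
    (hFm j n (by omega) hn).sub ((hgsm j).mono (F.mono (by omega : j - 1 ≤ n)))
  have hgnonpos : ∀ j, 2 ≤ j → g j ≤ᵐ[μ] 0 := by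
    intro j hj
    obtain ⟨i, rfl⟩ : ∃ i, j = i + 1 := ⟨j - 1, by omega⟩
    exact hcnd' i (by omega)
  have hcndd : ∀ n, 1 ≤ n → μ[d (n+1) | F n] =ᵐ[μ] 0 := by
    intro n hn
    have hgint : Integrable (g (n+1)) μ := integrable_condExp
    have hgid : μ[g (n+1) | F n] = g (n+1) :=
      condExp_of_stronglyMeasurable (F.le n) (hgsm (n+1)) hgint
    refine (condExp_sub ((hL2 (n+1) (by omega)).integrable one_le_two) hgint (m := F n)).trans ?_
    rw [hgid]
    have h3 : g (n+1) = μ[ξ (n+1) | F n] := rfl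
    exact Filter.EventuallyEq.of_eq (by rw [h3, sub_self])
  have hdK : ∀ j, 2 ≤ j → ∫ ω, d j ω ^ 2 ∂μ ≤ K := by
    intro j hj
    have hXm := hL2 j (by omega)
    have hGm := hgmem j hj
    have hGX : Integrable (g j * ξ j) μ := integrable_mul_of_memLp_two' hGm hXm
    have hXint := hXm.integrable one_le_two
    have hpull : μ[g j * ξ j | F (j-1)] =ᵐ[μ] g j * μ[ξ j | F (j-1)] :=
      condExp_mul_of_stronglyMeasurable_left (hgsm j) hGX hXint
    have hIGX : ∫ ω, (g j * ξ j) ω ∂μ = ∫ ω, g j ω ^ 2 ∂μ := by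
      rw [← integral_condExp (F.le (j-1)) (f := g j * ξ j), integral_congr_ae hpull]
      refine integral_congr_ae (ae_of_all _ fun ω => ?_)
      have h3 : μ[ξ j | F (j-1)] = g j := rfl
      simp only [Pi.mul_apply, h3]
      ring
    have hexp : ∀ ω, d j ω ^ 2 = ξ j ω ^ 2 - 2 * ((g j * ξ j) ω) + g j ω ^ 2 := fun ω => by
      simp only [hddef, Pi.sub_apply, Pi.mul_apply]
      ring
    rw [integral_congr_ae (ae_of_all _ hexp)]
    have hint1 : Integrable (fun ω => ξ j ω ^ 2 - 2 * ((g j * ξ j) ω)) μ :=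
      (hsq_int j (by omega)).sub (hGX.const_mul 2)
    rw [integral_add hint1 hGm.integrable_sq,
      integral_sub (hsq_int j (by omega)) (hGX.const_mul 2), integral_const_mul, hIGX]
    have hg2 : 0 ≤ ∫ ω, g j ω ^ 2 ∂μ := integral_nonneg fun ω => sq_nonneg _
    have := hKbound j (by omega)
    linarith
  have hmart := aux_mart F d hdmem hadp hcndd K hdK (half_pos hε)
  have hgae : ∀ᵐ ω ∂μ, ∀ j, 2 ≤ j → g j ω ≤ 0 := by
    rw [MeasureTheory.ae_all_iff]
    intro j
    by_cases hj : 2 ≤ j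
    · filter_upwards [hgnonpos j hj] with ω hω
      exact fun _ => hω
    · exact ae_of_all _ fun ω h => absurd h hj
  filter_upwards [hmart, hgae] with ω hω hgω
  obtain ⟨n₁, hn₁⟩ := hω
  obtain ⟨n₂, hn₂⟩ := exists_nat_gt ((2/ε) * ξ 1 ω)
  refine ⟨max n₁ (max n₂ 1), fun n hn => ?_⟩
  have hnn1 : n₁ ≤ n := le_trans (le_max_left _ _) hn
  have hnn2 : n₂ ≤ n := le_trans (le_trans (le_max_left _ _) (le_max_right _ _)) hn
  have hn1' : 1 ≤ n := le_trans (le_trans (le_max_right _ _) (le_max_right _ _)) hn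
  have hsplit : ∑ j ∈ Finset.Icc 1 n, ξ j ω = ξ 1 ω + ∑ j ∈ Finset.Icc 2 n, ξ j ω := by
    have h1 : Finset.Icc 1 n = insert 1 (Finset.Icc 2 n) := by
      ext x
      simp only [Finset.mem_Icc, Finset.mem_insert]
      omega
    rw [h1, Finset.sum_insert (by simp)]
  have hsum2 : ∑ j ∈ Finset.Icc 2 n, ξ j ω
      = (∑ j ∈ Finset.Icc 2 n, d j ω) + ∑ j ∈ Finset.Icc 2 n, g j ω := by
    rw [← Finset.sum_add_distrib]
    refine Finset.sum_congr rfl fun j hj => ?_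
    simp only [hddef, Pi.sub_apply]
    ring
  have hgsum : ∑ j ∈ Finset.Icc 2 n, g j ω ≤ 0 :=
    Finset.sum_nonpos fun j hj => hgω j (Finset.mem_Icc.1 hj).1
  have hd_lt := hn₁ n hnn1
  have hncast : (1:ℝ) ≤ (n:ℝ) := by exact_mod_cast hn1'
  have hξ1 : ξ 1 ω < (ε/2) * n := by
    have h4 : (2/ε) * ξ 1 ω < (n:ℝ) := lt_of_lt_of_le hn₂ (Nat.cast_le.mpr hnn2)
    have h5 := mul_lt_mul_of_pos_left h4 (half_pos hε)
    have h6 : (ε/2) * ((2/ε) * ξ 1 ω) = ξ 1 ω := by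
      field_simp
    rw [h6] at h5
    exact h5
  rw [hsplit, hsum2]
  have h7 : (ε/2) * (n:ℝ) + (ε/2) * (n:ℝ) = ε * n := by ring
  linarith [hd_lt, hgsum, hξ1]
end

section
/- Let (ℱ_n)_{n≥0} be a filtration on a probability space, let (r_n)_{n≥0} be a nonnegative integrable process adapted to (ℱ_n), let K > 0 and R ≥ 0 be constants, and let τ = inf{n ≥ 0 : r_n ≤ R} (with τ = ∞ if no such n exists). Suppose that for every n, E(r_{n+1} | ℱ_n) ≤ r_n − K almost surely on the event {τ > n}. Then for every n ≥ 1, P(τ > n) ≤ E r_0 / (K n). -/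
open MeasureTheory
open scoped ENNReal

/-- Let (r_n) be a nonnegative integrable process adapted to (ℱ_n), K > 0, R ≥ 0,
and τ = inf{n : r_n ≤ R}. If E(r_{n+1} | ℱ_n) ≤ r_n − K a.s. on {τ > n} for every n, then
P(τ > n) ≤ E r_0 / (K n) for every n ≥ 1.  (The event {τ > n} is the event that r_k > R for
all k ≤ n.) -/
theorem stmt4
    {Ω : Type*} {m0 : MeasurableSpace Ω} {μ : Measure Ω} [IsProbabilityMeasure μ]
    (ℱ : Filtration ℕ m0) (r : ℕ → Ω → ℝ)
    (hadapted : Adapted ℱ r) (hnonneg : ∀ n ω, 0 ≤ r n ω)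
    (hint : ∀ n, Integrable (r n) μ)
    (K R : ℝ) (hK : 0 < K) (hR : 0 ≤ R)
    (hdrift : ∀ n, ∀ᵐ ω ∂μ, (∀ k ≤ n, R < r k ω) →
      (μ[r (n + 1) | ℱ n]) ω ≤ r n ω - K) :
    ∀ n : ℕ, 1 ≤ n →
      μ {ω | ∀ k ≤ n, R < r k ω} ≤ ENNReal.ofReal ((∫ ω, r 0 ω ∂μ) / (K * n)) := by
  set A : ℕ → Set Ω := fun n => {ω | ∀ k ≤ n, R < r k ω} with hA_def
  -- measurability of A n with respect to ℱ n
  have hA : ∀ n, MeasurableSet[ℱ n] (A n) := by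
    intro n
    have : A n = ⋂ k ∈ Finset.range (n+1), {ω | R < r k ω} := by
      ext ω; simp [hA_def, Nat.lt_succ_iff]
    rw [this]
    refine MeasurableSet.biInter (Set.to_countable _) fun k hk => ?_
    have hk' : k ≤ n := Nat.lt_succ_iff.mp (Finset.mem_range.mp hk)
    exact (ℱ.mono hk' _) (measurableSet_lt measurable_const
      (hadapted k))
  have hAm0 : ∀ n, MeasurableSet (A n) := fun n => ℱ.le n _ (hA n)
  have hAmono : ∀ {m n : ℕ}, m ≤ n → A n ⊆ A m := by
    intro m n hmn ω hω k hk
    exact hω k (hk.trans hmn)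
  -- one-step inequality
  have step : ∀ n, (∫ ω in A n, r (n+1) ω ∂μ) + K * (μ (A n)).toReal
      ≤ ∫ ω in A n, r n ω ∂μ := by
    intro n
    have h1 : ∫ ω in A n, r (n+1) ω ∂μ = ∫ ω in A n, (μ[r (n+1) | ℱ n]) ω ∂μ :=
      (setIntegral_condExp (ℱ.le n) (hint (n+1)) (hA n)).symm
    have h2 : ∫ ω in A n, (μ[r (n+1) | ℱ n]) ω ∂μ ≤ ∫ ω in A n, (r n ω - K) ∂μ := by
      refine setIntegral_mono_ae_restrict integrable_condExp.integrableOn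
        (((hint n).sub (integrable_const K)).integrableOn) ?_
      rw [Filter.EventuallyLE, ae_restrict_iff' (hAm0 n)]
      filter_upwards [hdrift n] with ω hω hmem
      exact hω hmem
    have h3 : ∫ ω in A n, (r n ω - K) ∂μ
        = (∫ ω in A n, r n ω ∂μ) - K * (μ (A n)).toReal := by
      rw [integral_sub (hint n).integrableOn (integrable_const K).integrableOn,
        setIntegral_const, smul_eq_mul, mul_comm, measureReal_def]
    linarith [h1 ▸ h2.trans_eq h3]
  -- integrals shrink with the sets
  have shrink : ∀ n, ∫ ω in A (n+1), r (n+1) ω ∂μ ≤ ∫ ω in A n, r (n+1) ω ∂μ := by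
    intro n
    exact setIntegral_mono_set (hint (n+1)).integrableOn
      (Filter.Eventually.of_forall fun ω => hnonneg _ ω)
      (Filter.Eventually.of_forall (hAmono (Nat.le_succ n)))
  -- main induction
  have main : ∀ n, (∫ ω in A n, r (n+1) ω ∂μ)
      + K * ∑ j ∈ Finset.range (n+1), (μ (A j)).toReal ≤ ∫ ω, r 0 ω ∂μ := by
    intro n
    induction n with
    | zero =>
      have h := (step 0).trans (setIntegral_le_integral (hint 0)
        (Filter.Eventually.of_forall fun ω => hnonneg 0 ω))
      simpa using h
    | succ n ih =>
      rw [Finset.sum_range_succ, mul_add]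
      have := (step (n+1)).trans (shrink n)
      linarith
  intro n hn
  -- lower bound on the sum
  have hsum : (n+1 : ℝ) * (μ (A n)).toReal
      ≤ ∑ j ∈ Finset.range (n+1), (μ (A j)).toReal := by
    have : ∀ j ∈ Finset.range (n+1), (μ (A n)).toReal ≤ (μ (A j)).toReal := by
      intro j hj
      exact ENNReal.toReal_mono (measure_ne_top μ _)
        (measure_mono (hAmono (Nat.lt_succ_iff.mp (Finset.mem_range.mp hj))))
    calc (n+1 : ℝ) * (μ (A n)).toReal
        = ∑ _j ∈ Finset.range (n+1), (μ (A n)).toReal := by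
          simp [Finset.sum_const, mul_comm]
      _ ≤ _ := Finset.sum_le_sum this
  have hpos : (0:ℝ) ≤ ∫ ω in A n, r (n+1) ω ∂μ :=
    setIntegral_nonneg (hAm0 n) fun ω _ => hnonneg _ ω
  have hmain := main n
  have key : K * n * (μ (A n)).toReal ≤ ∫ ω, r 0 ω ∂μ := by
    have hμ0 : (0:ℝ) ≤ (μ (A n)).toReal := ENNReal.toReal_nonneg
    nlinarith [mul_le_mul_of_nonneg_left hsum (le_of_lt hK)]
  have hKn : (0:ℝ) < K * n := by
    have : (1:ℝ) ≤ n := by exact_mod_cast hn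
    nlinarith
  have hfin : (μ (A n)).toReal ≤ (∫ ω, r 0 ω ∂μ) / (K * n) :=
    (le_div_iff₀ hKn).mpr (by linarith [key])
  calc μ (A n) = ENNReal.ofReal (μ (A n)).toReal :=
        (ENNReal.ofReal_toReal (measure_ne_top μ _)).symm
    _ ≤ _ := ENNReal.ofReal_le_ofReal hfin
end

section
/- For every p ∈ (0, 1) there exists a constant C_p > 0 with the following property: for every compact connected set γ ⊂ ℝ² with diam(γ) ≥ 1 there exists a Borel probability measure ν supported on γ whose p-energy is bounded, that is, ∫∫_{γ×γ} |x − y|^{-p} dν(x) dν(y) ≤ C_p. -/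
open MeasureTheory
open scoped ENNReal

noncomputable section
namespace Stmt6

local notation "E2" => EuclideanSpace ℝ (Fin 2)

lemma measurable_sliceInf {K : Set E2} (hK : IsCompact K) (a : E2) (i : Fin 2) :
    Measurable fun t : ℝ => sInf ((fun x : E2 => x i) '' (K ∩ (fun x => dist a x) ⁻¹' {t})) := by
  set f : E2 → ℝ := fun x => dist a x with hfdef
  have hfc : Continuous f := continuous_const.dist continuous_id
  apply measurable_of_Iic
  intro z
  have hset : (fun t : ℝ => sInf ((fun x : E2 => x i) '' (K ∩ f ⁻¹' {t}))) ⁻¹' Set.Iic z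
      = f '' (K ∩ {x | x i ≤ z}) ∪ ((f '' K)ᶜ ∩ {t : ℝ | (0:ℝ) ≤ z}) := by
    ext t
    simp only [Set.mem_preimage, Set.mem_Iic, Set.mem_union, Set.mem_inter_iff,
      Set.mem_compl_iff, Set.mem_setOf_eq]
    by_cases ht : t ∈ f '' K
    · obtain ⟨x0, hx0K, hx0⟩ := ht
      have hKt : IsCompact (K ∩ f ⁻¹' {t}) :=
        hK.inter_right (isClosed_singleton.preimage hfc)
      have hne : ((fun x : E2 => x i) '' (K ∩ f ⁻¹' {t})).Nonempty :=
        ⟨x0 i, x0, ⟨hx0K, hx0⟩, rfl⟩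
      have hcpt : IsCompact ((fun x : E2 => x i) '' (K ∩ f ⁻¹' {t})) :=
        hKt.image (by fun_prop)
      constructor
      · intro hle
        obtain ⟨x, hxK, hxi⟩ := hcpt.sInf_mem hne
        exact Or.inl ⟨x, ⟨hxK.1, hxi.le.trans hle⟩, hxK.2⟩
      · rintro (⟨x, ⟨hxK, hxz⟩, hxt⟩ | ⟨hcontra, _⟩)
        · exact le_trans (csInf_le hcpt.bddBelow ⟨x, ⟨hxK, hxt⟩, rfl⟩) hxz
        · exact absurd ⟨x0, hx0K, hx0⟩ hcontra
    · have hempty : K ∩ f ⁻¹' {t} = ∅ := by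
        ext x; simp only [Set.mem_inter_iff, Set.mem_preimage, Set.mem_singleton_iff,
          Set.mem_empty_iff_false, iff_false, not_and]
        intro hxK hxt; exact ht ⟨x, hxK, hxt⟩
      rw [hempty]
      simp only [Set.image_empty, Real.sInf_empty]
      constructor
      · intro h0z
        exact Or.inr ⟨ht, h0z⟩
      · rintro (⟨x, ⟨hxK, _⟩, hxt⟩ | ⟨_, h0z⟩)
        · exact absurd ⟨x, hxK, hxt⟩ ht
        · exact h0z
  rw [hset]
  refine MeasurableSet.union ?_ ?_
  · exact ((hK.inter_right (isClosed_le (by fun_prop) continuous_const)).image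
      hfc).isClosed.measurableSet
  · refine ((hK.image hfc).isClosed.measurableSet.compl).inter ?_
    by_cases h0 : (0:ℝ) ≤ z
    · simp [h0]
    · simp [h0]

lemma exists_selection {γ : Set E2} (hγ : IsCompact γ) (a : E2) :
    ∃ sel : ℝ → E2, Measurable sel ∧
      ∀ t ∈ (fun x => dist a x) '' γ, sel t ∈ γ ∧ dist a (sel t) = t := by
  set f : E2 → ℝ := fun x => dist a x with hfdef
  have hfc : Continuous f := continuous_const.dist continuous_id
  have hc0 : Continuous fun x : E2 => x 0 := by fun_prop
  have hc1 : Continuous fun x : E2 => x 1 := by fun_prop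
  set m1 : ℝ → ℝ := fun t => sInf ((fun x : E2 => x 0) '' (γ ∩ f ⁻¹' {t})) with hm1def
  set m2 : ℝ → ℝ := fun t =>
    sInf ((fun x : E2 => x 1) '' ((γ ∩ f ⁻¹' {t}) ∩ {x | x 0 ≤ m1 t})) with hm2def
  have hm1 : Measurable m1 := measurable_sliceInf hγ a 0
  -- attainment facts, for t in the image of γ
  have hattain : ∀ t ∈ f '' γ, ∃ x ∈ γ ∩ f ⁻¹' {t}, x 0 = m1 t ∧ x 1 = m2 t := by
    intro t ht
    obtain ⟨x0, hx0γ, hx0⟩ := ht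
    have hKt : IsCompact (γ ∩ f ⁻¹' {t}) := hγ.inter_right (isClosed_singleton.preimage hfc)
    have hne0 : ((fun x : E2 => x 0) '' (γ ∩ f ⁻¹' {t})).Nonempty := ⟨x0 0, x0, ⟨hx0γ, hx0⟩, rfl⟩
    have hcpt0 : IsCompact ((fun x : E2 => x 0) '' (γ ∩ f ⁻¹' {t})) :=
      hKt.image hc0
    obtain ⟨y, hyK, hy0⟩ := hcpt0.sInf_mem hne0
    -- the set for m2
    have hS : IsCompact ((γ ∩ f ⁻¹' {t}) ∩ {x | x 0 ≤ m1 t}) :=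
      hKt.inter_right (isClosed_le hc0 continuous_const)
    have hne1 : ((fun x : E2 => x 1) '' ((γ ∩ f ⁻¹' {t}) ∩ {x | x 0 ≤ m1 t})).Nonempty :=
      ⟨y 1, y, ⟨hyK, hy0.le⟩, rfl⟩
    have hcpt1 : IsCompact ((fun x : E2 => x 1) '' ((γ ∩ f ⁻¹' {t}) ∩ {x | x 0 ≤ m1 t})) :=
      hS.image hc1
    obtain ⟨x, hxS, hx1⟩ := hcpt1.sInf_mem hne1
    refine ⟨x, hxS.1, le_antisymm hxS.2 ?_, hx1⟩
    exact csInf_le hcpt0.bddBelow ⟨x, hxS.1, rfl⟩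
  -- measurability of m2
  have hm2 : Measurable m2 := by
    apply measurable_of_Iic
    intro y
    set u : ℝ → ℝ := fun t =>
      sInf ((fun x : E2 => x 0) '' ((γ ∩ {x | x 1 ≤ y}) ∩ f ⁻¹' {t})) with hudef
    have hu : Measurable u :=
      measurable_sliceInf (hγ.inter_right (isClosed_le hc1 continuous_const)) a 0
    have hset : m2 ⁻¹' Set.Iic y
        = (f '' (γ ∩ {x | x 1 ≤ y}) ∩ {t | u t ≤ m1 t}) ∪ ((f '' γ)ᶜ ∩ {t : ℝ | (0:ℝ) ≤ y}) := by
      ext t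
      simp only [Set.mem_preimage, Set.mem_Iic, Set.mem_union, Set.mem_inter_iff,
        Set.mem_compl_iff, Set.mem_setOf_eq]
      by_cases ht : t ∈ f '' γ
      · have hKt : IsCompact (γ ∩ f ⁻¹' {t}) := hγ.inter_right (isClosed_singleton.preimage hfc)
        have hS : IsCompact ((γ ∩ f ⁻¹' {t}) ∩ {x | x 0 ≤ m1 t}) :=
          hKt.inter_right (isClosed_le hc0 continuous_const)
        have hcpt1 : IsCompact ((fun x : E2 => x 1) '' ((γ ∩ f ⁻¹' {t}) ∩ {x | x 0 ≤ m1 t})) :=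
          hS.image hc1
        obtain ⟨xs, hxsK, hxs0, hxs1⟩ := hattain t ht
        have hne1 : ((fun x : E2 => x 1) '' ((γ ∩ f ⁻¹' {t}) ∩ {x | x 0 ≤ m1 t})).Nonempty :=
          ⟨xs 1, xs, ⟨hxsK, hxs0.le⟩, rfl⟩
        -- m2 t ≤ y ↔ ∃ x ∈ γ ∩ f⁻¹{t}, x 0 ≤ m1 t ∧ x 1 ≤ y
        have hiff1 : m2 t ≤ y ↔ ∃ x ∈ (γ ∩ f ⁻¹' {t}) ∩ {x : E2 | x 0 ≤ m1 t}, x 1 ≤ y := by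
          constructor
          · intro h
            obtain ⟨x, hxS, hx1⟩ := hcpt1.sInf_mem hne1
            exact ⟨x, hxS, hx1.le.trans h⟩
          · rintro ⟨x, hxS, hx1⟩
            exact le_trans (csInf_le hcpt1.bddBelow ⟨x, hxS, rfl⟩) hx1
        have hKy : IsCompact ((γ ∩ {x : E2 | x 1 ≤ y}) ∩ f ⁻¹' {t}) :=
          (hγ.inter_right (isClosed_le hc1 continuous_const)).inter_right
            (isClosed_singleton.preimage hfc)
        have hcpty : IsCompact ((fun x : E2 => x 0) '' ((γ ∩ {x : E2 | x 1 ≤ y}) ∩ f ⁻¹' {t})) :=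
          hKy.image hc0
        have hiff2 : (∃ x ∈ (γ ∩ f ⁻¹' {t}) ∩ {x : E2 | x 0 ≤ m1 t}, x 1 ≤ y) ↔
            (t ∈ f '' (γ ∩ {x : E2 | x 1 ≤ y}) ∧ u t ≤ m1 t) := by
          constructor
          · rintro ⟨x, ⟨⟨hxγ, hxt⟩, hx0⟩, hx1⟩
            refine ⟨⟨x, ⟨hxγ, hx1⟩, hxt⟩, ?_⟩
            exact le_trans (csInf_le hcpty.bddBelow ⟨x, ⟨⟨hxγ, hx1⟩, hxt⟩, rfl⟩) hx0
          · rintro ⟨⟨x0, hx0m, hx0t⟩, hum⟩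
            have hney : ((fun x : E2 => x 0) '' ((γ ∩ {x : E2 | x 1 ≤ y}) ∩ f ⁻¹' {t})).Nonempty :=
              ⟨x0 0, x0, ⟨hx0m, hx0t⟩, rfl⟩
            obtain ⟨x, hxK, hx0⟩ := hcpty.sInf_mem hney
            exact ⟨x, ⟨⟨hxK.1.1, hxK.2⟩, hx0.le.trans hum⟩, hxK.1.2⟩
        rw [hiff1, hiff2]
        simp only [ht, not_true_eq_false, false_and, or_false]
      · have hempty : (γ ∩ f ⁻¹' {t}) ∩ {x : E2 | x 0 ≤ m1 t} = ∅ := by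
          ext x
          simp only [Set.mem_inter_iff, Set.mem_preimage, Set.mem_singleton_iff,
            Set.mem_empty_iff_false, iff_false, not_and, Set.mem_setOf_eq]
          rintro ⟨hxγ, hxt⟩ _
          exact ht ⟨x, hxγ, hxt⟩
        have hm2t : m2 t = 0 := by
          rw [hm2def]; simp only []; rw [hempty]
          simp [Real.sInf_empty]
        rw [hm2t]
        constructor
        · intro h0y
          exact Or.inr ⟨ht, h0y⟩
        · rintro (⟨⟨x, hxm, hxt⟩, _⟩ | ⟨_, h0y⟩)
          · exact absurd ⟨x, hxm.1, hxt⟩ ht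
          · exact h0y
    rw [hset]
    refine MeasurableSet.union ?_ ?_
    · exact (((hγ.inter_right (isClosed_le hc1 continuous_const)).image
        hfc).isClosed.measurableSet).inter (measurableSet_le hu hm1)
    · refine ((hγ.image hfc).isClosed.measurableSet.compl).inter ?_
      by_cases h0 : (0:ℝ) ≤ y
      · simp [h0]
      · simp [h0]
  -- the selection
  set sel : ℝ → E2 := fun t => (MeasurableEquiv.toLp 2 (Fin 2 → ℝ)) ![m1 t, m2 t]
    with hseldef
  have hselmeas : Measurable sel := by
    apply (MeasurableEquiv.toLp 2 (Fin 2 → ℝ)).measurable.comp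
    rw [measurable_pi_iff]
    intro i
    fin_cases i
    · simpa using hm1
    · simpa using hm2
  refine ⟨sel, hselmeas, ?_⟩
  intro t ht
  obtain ⟨x, hxK, hx0, hx1⟩ := hattain t ht
  have hx : sel t = x := by
    have : ∀ i : Fin 2, sel t i = x i := by
      intro i
      fin_cases i
      · show (![m1 t, m2 t] : Fin 2 → ℝ) 0 = x 0
        simp [hx0]
      · show (![m1 t, m2 t] : Fin 2 → ℝ) 1 = x 1
        simp [hx1]
    apply WithLp.ofLp_injective 2
    funext i
    exact this i
  rw [hx]
  exact ⟨hxK.1, hxK.2⟩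

lemma rpow_neg_anti {p : ℝ} (hp : 0 ≤ p) {x y : ℝ≥0∞} (h : x ≤ y) : y ^ (-p) ≤ x ^ (-p) := by
  rw [ENNReal.rpow_neg, ENNReal.rpow_neg]
  exact ENNReal.inv_le_inv.mpr (ENNReal.rpow_le_rpow h hp)

lemma ofReal_half_pow (k : ℕ) :
    ENNReal.ofReal ((1/2 : ℝ) ^ k) = (2 : ℝ≥0∞) ^ (-(k : ℝ)) := by
  rw [show ((1/2:ℝ)^k) = ((2:ℝ)^k)⁻¹ by rw [one_div, inv_pow]]
  rw [ENNReal.ofReal_inv_of_pos (by positivity)]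
  rw [ENNReal.ofReal_pow (by norm_num)]
  rw [show (ENNReal.ofReal 2) = 2 from by norm_num]
  rw [← ENNReal.rpow_natCast (2:ℝ≥0∞) k, ENNReal.rpow_neg]

lemma key_bound {p : ℝ} (hp0 : 0 < p) (hp1 : p < 1) (t : ℝ) :
    ∫⁻ s in Set.Icc (0:ℝ) (1/2), (ENNReal.ofReal |t - s|) ^ (-p) ≤
      ENNReal.ofReal (1/2) + (2:ℝ≥0∞) ^ (p+1) * (1 - (2:ℝ≥0∞) ^ (p-1))⁻¹ := by
  set g : ℝ → ℝ≥0∞ := fun s => (ENNReal.ofReal |t - s|) ^ (-p) with hgdef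
  set T1 : Set ℝ := {s : ℝ | 1 < |t - s|} ∩ Set.Icc (0:ℝ) (1/2) with hT1def
  set A : ℕ → Set ℝ := fun n => {s : ℝ | (1/2:ℝ)^(n+1) < |t - s| ∧ |t - s| ≤ (1/2:ℝ)^n}
    with hAdef
  have hcover : Set.Icc (0:ℝ) (1/2) ⊆ {t} ∪ (T1 ∪ ⋃ n : ℕ, A n) := by
    intro s hs
    rcases eq_or_ne s t with h | h
    · exact Or.inl h
    · have hd : 0 < |t - s| := by
        rw [abs_pos, sub_ne_zero]; exact (Ne.symm h)
      rcases lt_or_ge 1 |t - s| with h1 | h1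
      · exact Or.inr (Or.inl ⟨h1, hs⟩)
      · right; right
        have hex : ∃ n : ℕ, (1/2:ℝ)^(n+1) < |t - s| := by
          obtain ⟨n, hn⟩ := exists_pow_lt_of_lt_one hd (by norm_num : (1/2:ℝ) < 1)
          exact ⟨n, lt_of_le_of_lt
            (pow_le_pow_of_le_one (by norm_num) (by norm_num) (Nat.le_succ n)) hn⟩
        set n := Nat.find hex with hndef
        have hn1 : (1/2:ℝ)^(n+1) < |t - s| := Nat.find_spec hex
        have hn2 : |t - s| ≤ (1/2:ℝ)^n := by
          rcases Nat.eq_zero_or_pos n with h0 | h0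
          · rw [h0, pow_zero]; exact h1
          · obtain ⟨k, hk⟩ := Nat.exists_eq_succ_of_ne_zero h0.ne'
            have := Nat.find_min hex (by omega : k < n)
            rw [hk]
            exact le_of_not_gt this
        exact Set.mem_iUnion.2 ⟨n, hn1, hn2⟩
  calc ∫⁻ s in Set.Icc (0:ℝ) (1/2), g s
      ≤ ∫⁻ s in {t} ∪ (T1 ∪ ⋃ n : ℕ, A n), g s := lintegral_mono_set hcover
    _ ≤ (∫⁻ s in {t}, g s) + ((∫⁻ s in T1, g s) + ∫⁻ s in ⋃ n : ℕ, A n, g s) :=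
        le_trans (lintegral_union_le _ _ _) (by gcongr; exact lintegral_union_le _ _ _)
    _ ≤ 0 + (ENNReal.ofReal (1/2) + (2:ℝ≥0∞) ^ (p+1) * (1 - (2:ℝ≥0∞) ^ (p-1))⁻¹) := by
        gcongr
        · -- singleton
          rw [setLIntegral_measure_zero _ _ Real.volume_singleton]
        · -- T1
          calc ∫⁻ s in T1, g s ≤ ∫⁻ s in T1, 1 := by
                apply setLIntegral_mono measurable_const
                intro s hs
                have : (1:ℝ≥0∞) ≤ ENNReal.ofReal |t - s| := by
                  rw [show (1:ℝ≥0∞) = ENNReal.ofReal 1 by simp]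
                  exact ENNReal.ofReal_le_ofReal hs.1.le
                calc g s ≤ (1:ℝ≥0∞) ^ (-p) := rpow_neg_anti hp0.le this
                  _ = 1 := ENNReal.one_rpow _
            _ = volume T1 := by rw [setLIntegral_const, one_mul]
            _ ≤ volume (Set.Icc (0:ℝ) (1/2)) := measure_mono Set.inter_subset_right
            _ = ENNReal.ofReal (1/2) := by rw [Real.volume_Icc]; norm_num
        · -- dyadic annuli
          calc ∫⁻ s in ⋃ n : ℕ, A n, g s ≤ ∑' n : ℕ, ∫⁻ s in A n, g s :=
                lintegral_iUnion_le _ _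
            _ ≤ ∑' n : ℕ, (2:ℝ≥0∞) ^ (p+1) * ((2:ℝ≥0∞) ^ (p-1)) ^ n := by
                apply ENNReal.tsum_le_tsum
                intro n
                have hbound : ∀ s ∈ A n, g s ≤ (ENNReal.ofReal ((1/2:ℝ)^(n+1))) ^ (-p) := by
                  intro s hs
                  exact rpow_neg_anti hp0.le (ENNReal.ofReal_le_ofReal hs.1.le)
                calc ∫⁻ s in A n, g s
                    ≤ ∫⁻ _ in A n, (ENNReal.ofReal ((1/2:ℝ)^(n+1))) ^ (-p) :=
                      setLIntegral_mono measurable_const hbound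
                  _ = (ENNReal.ofReal ((1/2:ℝ)^(n+1))) ^ (-p) * volume (A n) :=
                      setLIntegral_const _ _
                  _ ≤ (ENNReal.ofReal ((1/2:ℝ)^(n+1))) ^ (-p)
                        * ENNReal.ofReal (2 * (1/2:ℝ)^n) := by
                      gcongr
                      have hsub : A n ⊆ Metric.closedBall t ((1/2:ℝ)^n) := by
                        intro s hs
                        rw [Metric.mem_closedBall, Real.dist_eq, abs_sub_comm]
                        exact hs.2
                      calc volume (A n) ≤ volume (Metric.closedBall t ((1/2:ℝ)^n)) :=
                            measure_mono hsub
                        _ = ENNReal.ofReal (2 * (1/2:ℝ)^n) := Real.volume_closedBall _ _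
                  _ = (2:ℝ≥0∞) ^ (p+1) * ((2:ℝ≥0∞) ^ (p-1)) ^ n := by
                      rw [ofReal_half_pow (n+1)]
                      rw [ENNReal.ofReal_mul (by norm_num : (0:ℝ) ≤ 2), ofReal_half_pow n]
                      rw [← ENNReal.rpow_natCast ((2:ℝ≥0∞) ^ (p-1)) n, ← ENNReal.rpow_mul]
                      rw [← ENNReal.rpow_mul]
                      rw [show (ENNReal.ofReal 2 : ℝ≥0∞) = 2 by norm_num]
                      nth_rewrite 2 [show ((2:ℝ≥0∞)) = (2:ℝ≥0∞) ^ (1:ℝ) from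
                        (ENNReal.rpow_one 2).symm]
                      rw [← ENNReal.rpow_add (1:ℝ) (-(n:ℝ)) (by norm_num) (by norm_num)]
                      rw [← ENNReal.rpow_add _ _ (by norm_num) (by norm_num)]
                      rw [← ENNReal.rpow_add _ _ (by norm_num) (by norm_num)]
                      congr 1
                      push_cast
                      ring
            _ = (2:ℝ≥0∞) ^ (p+1) * (1 - (2:ℝ≥0∞) ^ (p-1))⁻¹ := by
                rw [ENNReal.tsum_mul_left, ENNReal.tsum_geometric]
    _ = ENNReal.ofReal (1/2) + (2:ℝ≥0∞) ^ (p+1) * (1 - (2:ℝ≥0∞) ^ (p-1))⁻¹ := by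
        rw [zero_add]

end Stmt6
end

open Stmt6 in
/-- For every p ∈ (0,1) there is C_p > 0 such that every compact connected set
γ ⊂ ℝ² of diameter at least 1 carries a Borel probability measure ν supported on γ whose
p-energy ∫∫ |x−y|^{-p} dν dν is at most C_p. -/
theorem stmt6 (p : ℝ) (hp : p ∈ Set.Ioo (0 : ℝ) 1) :
    ∃ C : ℝ, 0 < C ∧
      ∀ γ : Set (EuclideanSpace ℝ (Fin 2)),
        IsCompact γ → IsConnected γ → 1 ≤ Metric.diam γ →
        ∃ ν : Measure (EuclideanSpace ℝ (Fin 2)), IsProbabilityMeasure ν ∧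
          ν γᶜ = 0 ∧
          ∫⁻ x, ∫⁻ y, (edist x y) ^ (-p) ∂ν ∂ν ≤ ENNReal.ofReal C := by
  obtain ⟨hp0, hp1⟩ := hp
  set B : ℝ≥0∞ := ENNReal.ofReal (1/2) + (2:ℝ≥0∞) ^ (p+1) * (1 - (2:ℝ≥0∞) ^ (p-1))⁻¹ with hBdef
  have hrlt : (2:ℝ≥0∞) ^ (p-1) < 1 := by
    have h := ENNReal.rpow_lt_rpow_of_exponent_lt (x := (2:ℝ≥0∞)) (by norm_num) (by norm_num)
      (by linarith : p - 1 < (0:ℝ))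
    rwa [ENNReal.rpow_zero] at h
  have hBne : B ≠ ⊤ := by
    rw [hBdef]
    refine ENNReal.add_ne_top.2 ⟨ENNReal.ofReal_ne_top, ENNReal.mul_ne_top ?_ ?_⟩
    · exact ENNReal.rpow_ne_top_of_nonneg (by linarith) (by norm_num)
    · rw [ENNReal.inv_ne_top]
      exact (tsub_pos_of_lt hrlt).ne'
  have hBpos : B ≠ 0 := by
    rw [hBdef]
    intro h
    have := ENNReal.ofReal_pos.2 (by norm_num : (0:ℝ) < 1/2)
    simp only [add_eq_zero] at h
    exact this.ne' h.1
  refine ⟨(2 * B).toReal, ?_, ?_⟩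
  · exact ENNReal.toReal_pos (by simp [hBpos]) (ENNReal.mul_ne_top (by norm_num) hBne)
  intro γ hcomp hconn hdiam
  -- two far-apart points
  have hex : ∃ a ∈ γ, ∃ b ∈ γ, (1/2:ℝ) < dist a b := by
    by_contra h
    push_neg at h
    have := Metric.diam_le_of_forall_dist_le (by norm_num : (0:ℝ) ≤ 1/2) h
    linarith
  obtain ⟨a, haγ, b, hbγ, hab⟩ := hex
  obtain ⟨sel, hsel, hselmem⟩ := exists_selection hcomp a
  have hfc : Continuous fun x : EuclideanSpace ℝ (Fin 2) => dist a x :=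
    continuous_const.dist continuous_id
  have hIcc : Set.Icc (0:ℝ) (1/2) ⊆ (fun x => dist a x) '' γ := by
    have hconn' : IsPreconnected ((fun x => dist a x) '' γ) :=
      (hconn.image _ hfc.continuousOn).isPreconnected
    have h0 : (0:ℝ) ∈ (fun x => dist a x) '' γ := ⟨a, haγ, dist_self a⟩
    have hd : dist a b ∈ (fun x => dist a x) '' γ := ⟨b, hbγ, rfl⟩
    intro t ht
    exact hconn'.Icc_subset h0 hd ⟨ht.1, le_trans ht.2 hab.le⟩
  set μ : Measure ℝ := (2:ℝ≥0∞) • volume.restrict (Set.Icc (0:ℝ) (1/2)) with hμdef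
  have hμuniv : μ Set.univ = 1 := by
    rw [hμdef]
    simp only [Measure.smul_apply, smul_eq_mul, Measure.restrict_apply MeasurableSet.univ,
      Set.univ_inter, Real.volume_Icc]
    rw [show (1/2 - 0 : ℝ) = 1/2 by norm_num]
    rw [show (2:ℝ≥0∞) = ENNReal.ofReal 2 from by norm_num]
    rw [← ENNReal.ofReal_mul (by norm_num)]
    norm_num
  haveI hμfin : IsFiniteMeasure μ := ⟨by rw [hμuniv]; exact ENNReal.one_lt_top⟩
  set ν : Measure (EuclideanSpace ℝ (Fin 2)) := μ.map sel with hνdef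
  have hmemsel : ∀ t ∈ Set.Icc (0:ℝ) (1/2), sel t ∈ γ ∧ dist a (sel t) = t :=
    fun t ht => hselmem t (hIcc ht)
  have hprob : IsProbabilityMeasure ν := by
    constructor
    rw [hνdef, Measure.map_apply hsel MeasurableSet.univ, Set.preimage_univ, hμuniv]
  refine ⟨ν, hprob, ?_, ?_⟩
  · -- support
    rw [hνdef, Measure.map_apply hsel hcomp.isClosed.measurableSet.compl]
    rw [hμdef]
    simp only [Measure.smul_apply, smul_eq_mul]
    rw [Measure.restrict_apply (hsel hcomp.isClosed.measurableSet.compl)]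
    have : sel ⁻¹' γᶜ ∩ Set.Icc (0:ℝ) (1/2) = ∅ := by
      ext t
      simp only [Set.mem_inter_iff, Set.mem_preimage, Set.mem_compl_iff,
        Set.mem_empty_iff_false, iff_false, not_and]
      intro hns ht
      exact hns (hmemsel t ht).1
    rw [this]
    simp
  · -- energy bound
    have hrpm : Measurable fun z : ℝ≥0∞ => z ^ (-p) :=
      ENNReal.continuous_rpow_const.measurable
    have hinner : ∀ x : EuclideanSpace ℝ (Fin 2),
        ∫⁻ y, edist x y ^ (-p) ∂ν = ∫⁻ s, edist x (sel s) ^ (-p) ∂μ := by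
      intro x
      rw [hνdef]
      exact lintegral_map (hrpm.comp (measurable_const.edist measurable_id)) hsel
    have houter : ∫⁻ x, ∫⁻ y, edist x y ^ (-p) ∂ν ∂ν
        = ∫⁻ t, ∫⁻ s, edist (sel t) (sel s) ^ (-p) ∂μ ∂μ := by
      rw [lintegral_congr hinner, hνdef]
      apply lintegral_map ?_ hsel
      apply Measurable.lintegral_prod_right'
        (f := fun q : EuclideanSpace ℝ (Fin 2) × ℝ => edist q.1 (sel q.2) ^ (-p))
      exact hrpm.comp (measurable_fst.edist (hsel.comp measurable_snd))
    rw [houter]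
    have hkey : ∀ t ∈ Set.Icc (0:ℝ) (1/2),
        ∫⁻ s, edist (sel t) (sel s) ^ (-p) ∂μ ≤ 2 * B := by
      intro t ht
      rw [hμdef]
      rw [lintegral_smul_measure]
      have hmono : ∫⁻ s in Set.Icc (0:ℝ) (1/2), edist (sel t) (sel s) ^ (-p)
          ≤ ∫⁻ s in Set.Icc (0:ℝ) (1/2), (ENNReal.ofReal |t - s|) ^ (-p) := by
        apply setLIntegral_mono (by fun_prop) 
        intro s hs
        apply rpow_neg_anti hp0.le
        rw [edist_dist]
        apply ENNReal.ofReal_le_ofReal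
        have h1 : dist a (sel t) = t := (hmemsel t ht).2
        have h2 : dist a (sel s) = s := (hmemsel s hs).2
        calc |t - s| = |dist (sel t) a - dist (sel s) a| := by
              rw [dist_comm (sel t) a, dist_comm (sel s) a, h1, h2]
          _ ≤ dist (sel t) (sel s) := abs_dist_sub_le _ _ _
      calc (2:ℝ≥0∞) * ∫⁻ s in Set.Icc (0:ℝ) (1/2), edist (sel t) (sel s) ^ (-p)
          ≤ 2 * ∫⁻ s in Set.Icc (0:ℝ) (1/2), (ENNReal.ofReal |t - s|) ^ (-p) := by gcongr
        _ ≤ 2 * B := by gcongr; exact key_bound hp0 hp1 t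
    calc ∫⁻ t, ∫⁻ s, edist (sel t) (sel s) ^ (-p) ∂μ ∂μ
        ≤ ∫⁻ _ in Set.Icc (0:ℝ) (1/2), (2 * B) ∂((2:ℝ≥0∞) • volume) := by
          rw [hμdef]
          rw [← Measure.restrict_smul]
          exact setLIntegral_mono (measurable_const) (fun t ht => by rw [Measure.restrict_smul]; exact hkey t ht)
      _ = 2 * B := by
          rw [Measure.restrict_smul]
          rw [lintegral_smul_measure, setLIntegral_const]
          rw [Real.volume_Icc, show (1/2 - 0 : ℝ) = 1/2 by norm_num]
          rw [show (2:ℝ≥0∞) = ENNReal.ofReal 2 from by norm_num]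
          rw [smul_eq_mul]
          rw [← mul_assoc]
          rw [mul_comm (ENNReal.ofReal 2) (ENNReal.ofReal 2 * B)]
          rw [mul_assoc, ← ENNReal.ofReal_mul (by norm_num)]
          norm_num
      _ = ENNReal.ofReal (2 * B).toReal := by
          rw [ENNReal.ofReal_toReal (ENNReal.mul_ne_top (by norm_num) hBne)]
end

section
/- For every α ∈ (0, π/2) there exist constants C₂ > 0 and R₁ > 0 such that the following holds: for all points A, B, B' ∈ ℝ² with B ≠ A, if dist(B, B') ≥ 1, the angle at the vertex B between the segments [B, B'] and [B, A] is at most α, and dist(B, B') ≤ C₂ · dist(B, A), then dist(B', A) ≤ dist(B, A) − R₁. -/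
open EuclideanGeometry Real

/-! Take `C₂ = cos α` and `R₁ = cos α / 2`. With `t = dist B B'` and `a = dist B A`, the law of
cosines gives `dist B' A ^ 2 ≤ t ^ 2 + a ^ 2 - 2 t a cos α`; since `1 ≤ t ≤ a cos α` this is at most
`a ^ 2 - a cos α ≤ (a - cos α / 2) ^ 2`. -/

lemma le_sub_half_of_sq_le_law_cos {a t c k : ℝ} (ht : 1 ≤ t) (hta : t ≤ k * a) (ha : 0 ≤ a)
    (hk1 : k ≤ 1) (h : c ^ 2 ≤ t ^ 2 + a ^ 2 - 2 * t * a * k) : c ≤ a - k / 2 := by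
  have hka : 1 ≤ k * a := ht.trans hta
  have hk : 0 < k := by nlinarith
  have hsq : c ^ 2 ≤ (a - k / 2) ^ 2 := by
    calc c ^ 2 ≤ a ^ 2 - t * (k * a) := by nlinarith
      _ ≤ a ^ 2 - k * a := by nlinarith
      _ ≤ (a - k / 2) ^ 2 := by nlinarith
  have hak : 0 ≤ a - k / 2 := by nlinarith
  exact abs_le_of_sq_le_sq' hsq hak |>.2

theorem dist_le_sub_of_le_cos_angle {V P : Type*} [NormedAddCommGroup V] [InnerProductSpace ℝ V]
    [MetricSpace P] [NormedAddTorsor V P] {A B B' : P} {k : ℝ} (hk : k ≤ cos (∠ B' B A))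
    (ht : 1 ≤ dist B B') (hC : dist B B' ≤ k * dist B A) : dist B' A ≤ dist B A - k / 2 := by
  have hlaw := law_cos B' B A
  rw [dist_comm B' B, dist_comm A B] at hlaw
  refine le_sub_half_of_sq_le_law_cos ht hC dist_nonneg (hk.trans (cos_le_one _)) ?_
  rw [sq, sq, sq, hlaw]
  have hprod : 0 ≤ 2 * dist B B' * dist B A := by positivity
  nlinarith [mul_le_mul_of_nonneg_left hk hprod]

/-- For every α ∈ (0, π/2) there exist C₂ > 0 and R₁ > 0 such that for all
A, B, B' ∈ ℝ² with B ≠ A: if dist(B, B') ≥ 1, the angle ∠(B' B A) is at most α, and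
dist(B, B') ≤ C₂ · dist(B, A), then dist(B', A) ≤ dist(B, A) − R₁. -/
theorem stmt8 (α : ℝ) (hα : α ∈ Set.Ioo (0 : ℝ) (Real.pi / 2)) :
    ∃ C₂ > (0 : ℝ), ∃ R₁ > (0 : ℝ),
      ∀ A B B' : EuclideanSpace ℝ (Fin 2), B ≠ A →
        1 ≤ dist B B' →
        EuclideanGeometry.angle B' B A ≤ α →
        dist B B' ≤ C₂ * dist B A →
        dist B' A ≤ dist B A - R₁ := by
  obtain ⟨hα0, hαπ⟩ := hα
  have hcos : 0 < cos α := cos_pos_of_mem_Ioo ⟨by linarith [pi_pos], hαπ⟩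
  refine ⟨cos α, hcos, cos α / 2, half_pos hcos, fun A B B' _ ht hθ hC => ?_⟩
  refine dist_le_sub_of_le_cos_angle ?_ ht hC
  exact cos_le_cos_of_nonneg_of_le_pi (angle_nonneg _ _ _) (by linarith [pi_pos]) hθ
end
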